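/- arXiv:2310.13964 — 8 statements merged into one kernel-verified Lean document; each statement's English description precedes it below -/
import Mathlib

section
/- Let y : [0,1] → ℂ be such that the quasi-derivatives y⁰ := y, y¹ := y', y² := (y¹)' + (σ₁+σ₀)y, y³ := (y²)' + (τ₂−2σ₀)y¹ are all absolutely continuous on [0,1], and set y⁴ := (y³)' − (σ₀²−σ₁²)y − (σ₁−σ₀)y² (defined almost everywhere and integrable on (0,1)). Then for every infinitely differentiable function φ : ℝ → ℂ whose support is a compact subset of (0,1), ∫₀¹ y(x)φ''''(x) dx − ∫₀¹ τ₂(x)y'(x)φ'(x) dx − ∫₀¹ τ₁(x)y(x)φ'(x) dx + ∫₀¹ τ₁(x)y'(x)φ(x) dx − ∫₀¹ r₀(x)(y(x)φ(x))' dx = ∫₀¹ y⁴(x)φ(x) dx; that is, the distribution ℓ(y) = y'''' + (τ₂y')' + (τ₁y)' + τ₁y' + τ₀y is a regular (integrable) function and equals y⁴. -/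
open MeasureTheory Set intervalIntegral


private lemma reg_triangle (f g : ℝ → ℂ) {x : ℝ}
    (hf : IntegrableOn f (Set.Ioc 0 x)) (hg : IntegrableOn g (Set.Ioc 0 x)) :
    (∫ t in Set.Ioc (0:ℝ) x, f t * ∫ s in Set.Ioc (0:ℝ) t, g s)
      + ∫ t in Set.Ioc (0:ℝ) x, g t * ∫ s in Set.Ioc (0:ℝ) t, f s
    = (∫ t in Set.Ioc (0:ℝ) x, f t) * ∫ t in Set.Ioc (0:ℝ) x, g t := by
  set μ := volume.restrict (Set.Ioc (0:ℝ) x) with hμ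
  have hfi : Integrable f μ := hf
  have hgi : Integrable g μ := hg
  have hF : Integrable (fun p : ℝ × ℝ => f p.1 * g p.2) (μ.prod μ) := hfi.mul_prod hgi
  have hA : MeasurableSet {p : ℝ × ℝ | p.2 ≤ p.1} :=
    measurableSet_le measurable_snd measurable_fst
  have hFA : Integrable ({p : ℝ × ℝ | p.2 ≤ p.1}.indicator fun p : ℝ × ℝ => f p.1 * g p.2)
      (μ.prod μ) := hF.indicator hA
  have hFB : Integrable ({p : ℝ × ℝ | p.2 ≤ p.1}ᶜ.indicator fun p : ℝ × ℝ => f p.1 * g p.2)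
      (μ.prod μ) := hF.indicator hA.compl
  have h1 : (∫ t in Set.Ioc (0:ℝ) x, f t * ∫ s in Set.Ioc (0:ℝ) t, g s)
      = ∫ p, ({p : ℝ × ℝ | p.2 ≤ p.1}.indicator fun p : ℝ × ℝ => f p.1 * g p.2) p
          ∂(μ.prod μ) := by
    rw [← MeasureTheory.integral_integral (f := fun t s =>
      ({p : ℝ × ℝ | p.2 ≤ p.1}.indicator fun p : ℝ × ℝ => f p.1 * g p.2) (t, s)) hFA]
    refine setIntegral_congr_fun measurableSet_Ioc (fun t ht => ?_)
    have e1 : (fun s => ({p : ℝ × ℝ | p.2 ≤ p.1}.indicator fun p : ℝ × ℝ => f p.1 * g p.2) (t, s))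
        = (Set.Iic t).indicator (fun s => f t * g s) := by
      ext s; by_cases h : s ≤ t <;> simp [Set.indicator, h]
    rw [e1, MeasureTheory.integral_indicator measurableSet_Iic, hμ,
      Measure.restrict_restrict measurableSet_Iic]
    have e2 : Set.Iic t ∩ Set.Ioc 0 x = Set.Ioc 0 t := by
      ext s; simp only [mem_inter_iff, mem_Iic, mem_Ioc]
      exact ⟨fun h => ⟨h.2.1, h.1⟩, fun h => ⟨h.2, h.1, h.2.trans ht.2⟩⟩
    rw [e2, MeasureTheory.integral_const_mul]
  have h2 : (∫ t in Set.Ioc (0:ℝ) x, g t * ∫ s in Set.Ioc (0:ℝ) t, f s)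
      = ∫ p, ({p : ℝ × ℝ | p.2 ≤ p.1}ᶜ.indicator fun p : ℝ × ℝ => f p.1 * g p.2) p
          ∂(μ.prod μ) := by
    rw [← MeasureTheory.integral_integral (f := fun t s =>
      ({p : ℝ × ℝ | p.2 ≤ p.1}ᶜ.indicator fun p : ℝ × ℝ => f p.1 * g p.2) (t, s)) hFB,
      MeasureTheory.integral_integral_swap (f := fun t s =>
      ({p : ℝ × ℝ | p.2 ≤ p.1}ᶜ.indicator fun p : ℝ × ℝ => f p.1 * g p.2) (t, s)) hFB]
    refine setIntegral_congr_fun measurableSet_Ioc (fun s hs => ?_)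
    have e1 : (fun t => ({p : ℝ × ℝ | p.2 ≤ p.1}ᶜ.indicator fun p : ℝ × ℝ => f p.1 * g p.2) (t, s))
        = (Set.Iio s).indicator (fun t => f t * g s) := by
      ext t; by_cases h : t < s
      · simp [Set.indicator, h, not_le.2 h]
      · simp [Set.indicator, h, not_lt.1 h]
    rw [e1, MeasureTheory.integral_indicator measurableSet_Iio, hμ,
      Measure.restrict_restrict measurableSet_Iio]
    have e2 : Set.Iio s ∩ Set.Ioc 0 x = Set.Ioo 0 s := by
      ext t; simp only [mem_inter_iff, mem_Iio, mem_Ioc, mem_Ioo]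
      exact ⟨fun h => ⟨h.2.1, h.1⟩, fun h => ⟨h.2, h.1, (le_of_lt h.2).trans hs.2⟩⟩
    rw [e2, MeasureTheory.integral_mul_const, ← integral_Ioc_eq_integral_Ioo, mul_comm]
  rw [h1, h2, ← integral_add hFA hFB]
  have key : ∀ p : ℝ × ℝ, ({p : ℝ × ℝ | p.2 ≤ p.1}.indicator fun p : ℝ × ℝ => f p.1 * g p.2) p
      + ({p : ℝ × ℝ | p.2 ≤ p.1}ᶜ.indicator fun p : ℝ × ℝ => f p.1 * g p.2) p
      = f p.1 * g p.2 := fun p => by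
    classical
    by_cases h : p ∈ {p : ℝ × ℝ | p.2 ≤ p.1} <;> simp [Set.indicator, h]
  simp only [key]
  exact MeasureTheory.integral_prod_mul f g

private lemma reg_triangle' (f g : ℝ → ℂ) {x : ℝ} (hx : 0 ≤ x)
    (hf : IntervalIntegrable f volume 0 x) (hg : IntervalIntegrable g volume 0 x) :
    (∫ t in (0:ℝ)..x, f t * ∫ s in (0:ℝ)..t, g s)
      + ∫ t in (0:ℝ)..x, g t * ∫ s in (0:ℝ)..t, f s
    = (∫ t in (0:ℝ)..x, f t) * ∫ t in (0:ℝ)..x, g t := by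
  have hf' : IntegrableOn f (Set.Ioc 0 x) :=
    (intervalIntegrable_iff_integrableOn_Ioc_of_le hx).1 hf
  have hg' : IntegrableOn g (Set.Ioc 0 x) :=
    (intervalIntegrable_iff_integrableOn_Ioc_of_le hx).1 hg
  have e : ∀ h k : ℝ → ℂ, (∫ t in (0:ℝ)..x, h t * ∫ s in (0:ℝ)..t, k s)
      = ∫ t in Set.Ioc (0:ℝ) x, h t * ∫ s in Set.Ioc (0:ℝ) t, k s := by
    intro h k
    rw [integral_of_le hx]
    exact setIntegral_congr_fun measurableSet_Ioc fun t ht => by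
      rw [integral_of_le ht.1.le]
  rw [e f g, e g f, integral_of_le hx, integral_of_le hx]
  exact reg_triangle f g hf' hg'

private lemma reg_continuousOn (f F : ℝ → ℂ) (hf : IntervalIntegrable f volume 0 1)
    (hF : ∀ x ∈ Set.Icc (0:ℝ) 1, F x = F 0 + ∫ t in (0:ℝ)..x, f t) :
    ContinuousOn F (Set.uIcc 0 1) := by
  have h : ContinuousOn (fun z => F 0 + ∫ t in (0:ℝ)..z, f t) (Set.uIcc 0 1) :=
    continuousOn_const.add (continuousOn_primitive_interval' hf left_mem_uIcc)
  exact h.congr fun z hz => hF z (by simpa [Set.uIcc_of_le (zero_le_one' ℝ)] using hz)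

private lemma reg_prodRule (f g F G : ℝ → ℂ)
    (hf : IntervalIntegrable f volume 0 1) (hg : IntervalIntegrable g volume 0 1)
    (hF : ∀ x ∈ Set.Icc (0:ℝ) 1, F x = F 0 + ∫ t in (0:ℝ)..x, f t)
    (hG : ∀ x ∈ Set.Icc (0:ℝ) 1, G x = G 0 + ∫ t in (0:ℝ)..x, g t)
    {x : ℝ} (hx : x ∈ Set.Icc (0:ℝ) 1) :
    F x * G x = F 0 * G 0 + ∫ t in (0:ℝ)..x, (f t * G t + F t * g t) := by
  obtain ⟨hx0, hx1⟩ := hx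
  have hsub : Set.uIcc (0:ℝ) x ⊆ Set.uIcc 0 1 :=
    Set.uIcc_subset_uIcc left_mem_uIcc (by simp [Set.uIcc_of_le (zero_le_one' ℝ), hx0, hx1])
  have hfx : IntervalIntegrable f volume 0 x := hf.mono_set hsub
  have hgx : IntervalIntegrable g volume 0 x := hg.mono_set hsub
  have cIf : ContinuousOn (fun t => ∫ s in (0:ℝ)..t, f s) (Set.uIcc 0 x) :=
    (continuousOn_primitive_interval' hf left_mem_uIcc).mono hsub
  have cIg : ContinuousOn (fun t => ∫ s in (0:ℝ)..t, g s) (Set.uIcc 0 x) :=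
    (continuousOn_primitive_interval' hg left_mem_uIcc).mono hsub
  have i1 : IntervalIntegrable (fun t => f t * ∫ s in (0:ℝ)..t, g s) volume 0 x :=
    hfx.mul_continuousOn cIg
  have i2 : IntervalIntegrable (fun t => g t * ∫ s in (0:ℝ)..t, f s) volume 0 x :=
    hgx.mul_continuousOn cIf
  have step1 : (∫ t in (0:ℝ)..x, (f t * G t + F t * g t))
      = ∫ t in (0:ℝ)..x, (G 0 * f t + f t * (∫ s in (0:ℝ)..t, g s)
          + (F 0 * g t + g t * ∫ s in (0:ℝ)..t, f s)) := by
    refine integral_congr fun t ht => ?_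
    have ht' : t ∈ Set.Icc (0:ℝ) 1 := by
      rw [Set.uIcc_of_le hx0] at ht; exact ⟨ht.1, ht.2.trans hx1⟩
    rw [hF t ht', hG t ht']; ring
  rw [step1, integral_add ((hfx.const_mul _).add i1) ((hgx.const_mul _).add i2),
    integral_add (hfx.const_mul _) i1, integral_add (hgx.const_mul _) i2,
    intervalIntegral.integral_const_mul, intervalIntegral.integral_const_mul]
  have tri := reg_triangle' f g hx0 hfx hgx
  rw [hF x ⟨hx0, hx1⟩, hG x ⟨hx0, hx1⟩]
  linear_combination -tri

private lemma reg_ibp (f F : ℝ → ℂ) (hf : IntervalIntegrable f volume 0 1)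
    (hF : ∀ x ∈ Set.Icc (0:ℝ) 1, F x = F 0 + ∫ t in (0:ℝ)..x, f t)
    (ψ ψ' : ℝ → ℂ) (hψ : ∀ t, HasDerivAt ψ (ψ' t) t) (hψ'c : Continuous ψ')
    (h0 : ψ 0 = 0) (h1 : ψ 1 = 0) :
    (∫ x in (0:ℝ)..1, F x * ψ' x) = - ∫ x in (0:ℝ)..1, f x * ψ x := by
  have hψc : Continuous ψ := by
    rw [continuous_iff_continuousAt]; exact fun t => (hψ t).continuousAt
  have hg : IntervalIntegrable ψ' volume 0 1 := hψ'c.intervalIntegrable 0 1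
  have hGrep : ∀ x ∈ Set.Icc (0:ℝ) 1, ψ x = ψ 0 + ∫ t in (0:ℝ)..x, ψ' t := by
    intro x _
    rw [integral_eq_sub_of_hasDerivAt (fun t _ => hψ t) (hψ'c.intervalIntegrable 0 x)]
    ring
  have key := reg_prodRule f ψ' F ψ hf hg hF hGrep (Set.right_mem_Icc.2 zero_le_one)
  rw [h0, h1, mul_zero, mul_zero] at key
  have iFψ' : IntervalIntegrable (fun x => F x * ψ' x) volume 0 1 :=
    hg.continuousOn_mul (reg_continuousOn f F hf hF)
  have ifψ : IntervalIntegrable (fun x => f x * ψ x) volume 0 1 :=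
    hf.mul_continuousOn hψc.continuousOn
  rw [integral_add ifψ iFψ'] at key
  linear_combination -key

/-- **regularization, Proposition 1.** Suppose `r₀, τ₁ ∈ L²(0,1)`,
`τ₂ ∈ W₂¹[0,1]`, `σ₁(x) = ∫₀ˣ τ₁`, `σ₀(x) = ∫₀ˣ r₀ − x∫₀¹ r₀`. If the quasi-derivatives
`y⁰ = y`, `y¹ = y'`, `y² = (y¹)' + (σ₁+σ₀)y`, `y³ = (y²)' + (τ₂−2σ₀)y¹` are absolutely
continuous on `[0,1]` and `y⁴ = (y³)' − (σ₀²−σ₁²)y − (σ₁−σ₀)y²` is integrable, then for every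
test function `φ ∈ C₀^∞(0,1)`,
`∫ y φ'''' − ∫ τ₂ y' φ' − ∫ τ₁ y φ' + ∫ τ₁ y' φ − ∫ r₀ (yφ)' = ∫ y⁴ φ`,
i.e. the distribution `ℓ(y) = y'''' + (τ₂y')' + (τ₁y)' + τ₁y' + τ₀y`, `τ₀ = r₀'`, is regular
and equals `y⁴`. -/
theorem regularization_fourth_order
    (r₀ τ₁ τ₂ dτ₂ : ℝ → ℂ)
    (hr₀ : MemLp r₀ 2 (volume.restrict (Set.Ioc (0:ℝ) 1)))
    (hτ₁ : MemLp τ₁ 2 (volume.restrict (Set.Ioc (0:ℝ) 1)))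
    (hdτ₂ : MemLp dτ₂ 2 (volume.restrict (Set.Ioc (0:ℝ) 1)))
    (hτ₂ : ∀ x ∈ Set.Icc (0:ℝ) 1, τ₂ x = τ₂ 0 + ∫ t in (0:ℝ)..x, dτ₂ t)
    (σ₀ σ₁ : ℝ → ℂ)
    (hσ₁ : ∀ x, σ₁ x = ∫ t in (0:ℝ)..x, τ₁ t)
    (hσ₀ : ∀ x, σ₀ x = (∫ t in (0:ℝ)..x, r₀ t) - x * ∫ t in (0:ℝ)..(1:ℝ), r₀ t)
    (y0 y1 y2 y3 y4 : ℝ → ℂ)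
    -- absolute continuity of the quasi-derivatives `y⁰, y¹, y², y³` on `[0,1]`,
    -- encoded by the integral representations defining `y¹, y², y³, y⁴`:
    (hi1 : IntervalIntegrable y1 volume 0 1)
    (hi2 : IntervalIntegrable (fun t => y2 t - (σ₁ t + σ₀ t) * y0 t) volume 0 1)
    (hi3 : IntervalIntegrable (fun t => y3 t - (τ₂ t - 2 * σ₀ t) * y1 t) volume 0 1)
    (hi4 : IntervalIntegrable y4 volume 0 1)
    (hy0 : ∀ x ∈ Set.Icc (0:ℝ) 1, y0 x = y0 0 + ∫ t in (0:ℝ)..x, y1 t)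
    (hy1 : ∀ x ∈ Set.Icc (0:ℝ) 1,
      y1 x = y1 0 + ∫ t in (0:ℝ)..x, (y2 t - (σ₁ t + σ₀ t) * y0 t))
    (hy2 : ∀ x ∈ Set.Icc (0:ℝ) 1,
      y2 x = y2 0 + ∫ t in (0:ℝ)..x, (y3 t - (τ₂ t - 2 * σ₀ t) * y1 t))
    (hy3 : ∀ x ∈ Set.Icc (0:ℝ) 1,
      y3 x = y3 0 + ∫ t in (0:ℝ)..x,
        (y4 t + (σ₀ t ^ 2 - σ₁ t ^ 2) * y0 t + (σ₁ t - σ₀ t) * y2 t)) :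
    ∀ φ : ℝ → ℂ, ContDiff ℝ (⊤ : ℕ∞) φ → HasCompactSupport φ → tsupport φ ⊆ Set.Ioo (0:ℝ) 1 →
      ((∫ x in (0:ℝ)..1, y0 x * iteratedDeriv 4 φ x)
        - (∫ x in (0:ℝ)..1, τ₂ x * y1 x * deriv φ x)
        - (∫ x in (0:ℝ)..1, τ₁ x * y0 x * deriv φ x)
        + (∫ x in (0:ℝ)..1, τ₁ x * y1 x * φ x)
        - (∫ x in (0:ℝ)..1, r₀ x * (y1 x * φ x + y0 x * deriv φ x)))
      = ∫ x in (0:ℝ)..1, y4 x * φ x := by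
  intro φ hsm hcs hsupp
  -- the derivatives of the test function
  set φ1 := deriv φ with hd1
  set φ2 := deriv φ1 with hd2
  set φ3 := deriv φ2 with hd3
  set φ4 := deriv φ3 with hd4
  have c0 : ContDiff ℝ ((⊤ : ℕ∞) : WithTop ℕ∞) φ := hsm.of_le (by simp)
  have c1 : ContDiff ℝ ((⊤ : ℕ∞) : WithTop ℕ∞) φ1 := (contDiff_infty_iff_deriv.mp c0).2
  have c2 : ContDiff ℝ ((⊤ : ℕ∞) : WithTop ℕ∞) φ2 := (contDiff_infty_iff_deriv.mp c1).2
  have c3 : ContDiff ℝ ((⊤ : ℕ∞) : WithTop ℕ∞) φ3 := (contDiff_infty_iff_deriv.mp c2).2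
  have c4 : ContDiff ℝ ((⊤ : ℕ∞) : WithTop ℕ∞) φ4 := (contDiff_infty_iff_deriv.mp c3).2
  have d0 : ∀ t, HasDerivAt φ (φ1 t) t := fun t =>
    ((c0.differentiable (by simp)) t).hasDerivAt
  have d1 : ∀ t, HasDerivAt φ1 (φ2 t) t := fun t =>
    ((c1.differentiable (by simp)) t).hasDerivAt
  have d2 : ∀ t, HasDerivAt φ2 (φ3 t) t := fun t =>
    ((c2.differentiable (by simp)) t).hasDerivAt
  have d3 : ∀ t, HasDerivAt φ3 (φ4 t) t := fun t =>
    ((c3.differentiable (by simp)) t).hasDerivAt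
  have hiter : iteratedDeriv 4 φ = φ4 := by
    rw [hd4, hd3, hd2, hd1]
    simp [iteratedDeriv_succ, iteratedDeriv_zero]
  rw [hiter]
  -- vanishing at the endpoints
  have hts1 : tsupport φ1 ⊆ tsupport φ :=
    closure_minimal (support_deriv_subset) isClosed_closure
  have hts2 : tsupport φ2 ⊆ tsupport φ :=
    (closure_minimal (support_deriv_subset) isClosed_closure).trans hts1
  have hts3 : tsupport φ3 ⊆ tsupport φ :=
    (closure_minimal (support_deriv_subset) isClosed_closure).trans hts2
  have hn0 : (0:ℝ) ∉ tsupport φ := fun h => by simpa using hsupp h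
  have hn1 : (1:ℝ) ∉ tsupport φ := fun h => by simpa using hsupp h
  have z00 : φ 0 = 0 := image_eq_zero_of_notMem_tsupport hn0
  have z01 : φ 1 = 0 := image_eq_zero_of_notMem_tsupport hn1
  have z10 : φ1 0 = 0 := image_eq_zero_of_notMem_tsupport (fun h => hn0 (hts1 h))
  have z11 : φ1 1 = 0 := image_eq_zero_of_notMem_tsupport (fun h => hn1 (hts1 h))
  have z20 : φ2 0 = 0 := image_eq_zero_of_notMem_tsupport (fun h => hn0 (hts2 h))
  have z21 : φ2 1 = 0 := image_eq_zero_of_notMem_tsupport (fun h => hn1 (hts2 h))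
  have z30 : φ3 0 = 0 := image_eq_zero_of_notMem_tsupport (fun h => hn0 (hts3 h))
  have z31 : φ3 1 = 0 := image_eq_zero_of_notMem_tsupport (fun h => hn1 (hts3 h))
  -- basic integrability
  haveI : IsFiniteMeasure (volume.restrict (Set.Ioc (0:ℝ) 1)) :=
    ⟨by rw [Measure.restrict_apply_univ]; simp⟩
  have ir₀ : IntervalIntegrable r₀ volume 0 1 :=
    (intervalIntegrable_iff_integrableOn_Ioc_of_le zero_le_one).2 (hr₀.integrable one_le_two)
  have iτ₁ : IntervalIntegrable τ₁ volume 0 1 :=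
    (intervalIntegrable_iff_integrableOn_Ioc_of_le zero_le_one).2 (hτ₁.integrable one_le_two)
  have idτ₂ : IntervalIntegrable dτ₂ volume 0 1 :=
    (intervalIntegrable_iff_integrableOn_Ioc_of_le zero_le_one).2 (hdτ₂.integrable one_le_two)
  set C : ℂ := ∫ t in (0:ℝ)..(1:ℝ), r₀ t with hC
  -- representations of σ₀, σ₁
  have hσ₀0 : σ₀ 0 = 0 := by simp [hσ₀]
  have hσ₁0 : σ₁ 0 = 0 := by simp [hσ₁]
  have hsubx : ∀ x ∈ Set.Icc (0:ℝ) 1, Set.uIcc (0:ℝ) x ⊆ Set.uIcc (0:ℝ) 1 := fun x hx =>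
    Set.uIcc_subset_uIcc left_mem_uIcc
      (by simp [Set.uIcc_of_le (zero_le_one' ℝ), hx.1, hx.2])
  have ifσ₀ : IntervalIntegrable (fun t => r₀ t - C) volume 0 1 :=
    ir₀.sub intervalIntegrable_const
  have repσ₀ : ∀ x ∈ Set.Icc (0:ℝ) 1, σ₀ x = σ₀ 0 + ∫ t in (0:ℝ)..x, (r₀ t - C) := by
    intro x hx
    have h1 : (∫ t in (0:ℝ)..x, (r₀ t - C)) = (∫ t in (0:ℝ)..x, r₀ t) - x * C := by
      rw [integral_sub (ir₀.mono_set (hsubx x hx)) intervalIntegrable_const,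
        intervalIntegral.integral_const]
      simp [Complex.real_smul]
    rw [h1, hσ₀ x, hσ₀0]; ring
  have repσ₁ : ∀ x ∈ Set.Icc (0:ℝ) 1, σ₁ x = σ₁ 0 + ∫ t in (0:ℝ)..x, τ₁ t := by
    intro x _; rw [hσ₁ x, hσ₁0, zero_add]
  -- continuity on [0,1]
  have cσ₀ : ContinuousOn σ₀ (Set.uIcc 0 1) := reg_continuousOn _ σ₀ ifσ₀ repσ₀
  have cσ₁ : ContinuousOn σ₁ (Set.uIcc 0 1) := reg_continuousOn τ₁ σ₁ iτ₁ repσ₁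
  have cτ₂ : ContinuousOn τ₂ (Set.uIcc 0 1) := reg_continuousOn dτ₂ τ₂ idτ₂ hτ₂
  have cy0 : ContinuousOn y0 (Set.uIcc 0 1) := reg_continuousOn y1 y0 hi1 hy0
  have cy1 : ContinuousOn y1 (Set.uIcc 0 1) := reg_continuousOn _ y1 hi2 hy1
  have cy2 : ContinuousOn y2 (Set.uIcc 0 1) := reg_continuousOn _ y2 hi3 hy2
  have iq3 : IntervalIntegrable
      (fun t => y4 t + (σ₀ t ^ 2 - σ₁ t ^ 2) * y0 t + (σ₁ t - σ₀ t) * y2 t) volume 0 1 :=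
    (hi4.add ((((cσ₀.pow 2).sub (cσ₁.pow 2)).mul cy0).intervalIntegrable)).add
      (((cσ₁.sub cσ₀).mul cy2).intervalIntegrable)
  have cy3 : ContinuousOn y3 (Set.uIcc 0 1) := reg_continuousOn _ y3 iq3 hy3
  -- representations of the products (σ₁ ± σ₀) * y_i
  have repsum : ∀ x ∈ Set.Icc (0:ℝ) 1,
      σ₁ x + σ₀ x = (σ₁ 0 + σ₀ 0) + ∫ t in (0:ℝ)..x, (τ₁ t + (r₀ t - C)) := by
    intro x hx
    rw [integral_add (iτ₁.mono_set (hsubx x hx)) (ifσ₀.mono_set (hsubx x hx)),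
      repσ₁ x hx, repσ₀ x hx]
    ring
  have repdiff : ∀ x ∈ Set.Icc (0:ℝ) 1,
      σ₁ x - σ₀ x = (σ₁ 0 - σ₀ 0) + ∫ t in (0:ℝ)..x, (τ₁ t - (r₀ t - C)) := by
    intro x hx
    rw [integral_sub (iτ₁.mono_set (hsubx x hx)) (ifσ₀.mono_set (hsubx x hx)),
      repσ₁ x hx, repσ₀ x hx]
    ring
  have ifsum : IntervalIntegrable (fun t => τ₁ t + (r₀ t - C)) volume 0 1 := iτ₁.add ifσ₀
  have ifdiff : IntervalIntegrable (fun t => τ₁ t - (r₀ t - C)) volume 0 1 := iτ₁.sub ifσ₀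
  have repA : ∀ x ∈ Set.Icc (0:ℝ) 1, (σ₁ x + σ₀ x) * y0 x
      = (σ₁ 0 + σ₀ 0) * y0 0 + ∫ t in (0:ℝ)..x,
          ((τ₁ t + (r₀ t - C)) * y0 t + (σ₁ t + σ₀ t) * y1 t) := fun x hx =>
    reg_prodRule _ y1 (fun t => σ₁ t + σ₀ t) y0 ifsum hi1 repsum hy0 hx
  have repB : ∀ x ∈ Set.Icc (0:ℝ) 1, (σ₁ x - σ₀ x) * y1 x
      = (σ₁ 0 - σ₀ 0) * y1 0 + ∫ t in (0:ℝ)..x,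
          ((τ₁ t - (r₀ t - C)) * y1 t
            + (σ₁ t - σ₀ t) * (y2 t - (σ₁ t + σ₀ t) * y0 t)) := fun x hx =>
    reg_prodRule _ _ (fun t => σ₁ t - σ₀ t) y1 ifdiff hi2 repdiff hy1 hx
  have idA : IntervalIntegrable
      (fun t => (τ₁ t + (r₀ t - C)) * y0 t + (σ₁ t + σ₀ t) * y1 t) volume 0 1 :=
    (ifsum.mul_continuousOn cy0).add (hi1.continuousOn_mul (cσ₁.add cσ₀))
  have idB : IntervalIntegrable
      (fun t => (τ₁ t - (r₀ t - C)) * y1 t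
        + (σ₁ t - σ₀ t) * (y2 t - (σ₁ t + σ₀ t) * y0 t)) volume 0 1 :=
    (ifdiff.mul_continuousOn cy1).add (hi2.continuousOn_mul (cσ₁.sub cσ₀))
  -- the integration-by-parts identities
  have S1 : (∫ x in (0:ℝ)..1, y0 x * φ4 x) = - ∫ x in (0:ℝ)..1, y1 x * φ3 x :=
    reg_ibp y1 y0 hi1 hy0 φ3 φ4 d3 (c4.continuous) z30 z31
  have S2 : (∫ x in (0:ℝ)..1, y1 x * φ3 x)
      = - ∫ x in (0:ℝ)..1, (y2 x - (σ₁ x + σ₀ x) * y0 x) * φ2 x :=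
    reg_ibp _ y1 hi2 hy1 φ2 φ3 d2 (c3.continuous) z20 z21
  have S3 : (∫ x in (0:ℝ)..1, y2 x * φ2 x)
      = - ∫ x in (0:ℝ)..1, (y3 x - (τ₂ x - 2 * σ₀ x) * y1 x) * φ1 x :=
    reg_ibp _ y2 hi3 hy2 φ1 φ2 d1 (c2.continuous) z10 z11
  have S4 : (∫ x in (0:ℝ)..1, y3 x * φ1 x)
      = - ∫ x in (0:ℝ)..1,
          (y4 x + (σ₀ x ^ 2 - σ₁ x ^ 2) * y0 x + (σ₁ x - σ₀ x) * y2 x) * φ x :=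
    reg_ibp _ y3 iq3 hy3 φ φ1 d0 (c1.continuous) z00 z01
  have S5 : (∫ x in (0:ℝ)..1, (σ₁ x + σ₀ x) * y0 x * φ2 x)
      = - ∫ x in (0:ℝ)..1,
          ((τ₁ x + (r₀ x - C)) * y0 x + (σ₁ x + σ₀ x) * y1 x) * φ1 x :=
    reg_ibp _ (fun t => (σ₁ t + σ₀ t) * y0 t) idA repA φ1 φ2 d1 (c2.continuous) z10 z11
  have S6 : (∫ x in (0:ℝ)..1, (σ₁ x - σ₀ x) * y1 x * φ1 x)
      = - ∫ x in (0:ℝ)..1,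
          ((τ₁ x - (r₀ x - C)) * y1 x
            + (σ₁ x - σ₀ x) * (y2 x - (σ₁ x + σ₀ x) * y0 x)) * φ x :=
    reg_ibp _ (fun t => (σ₁ t - σ₀ t) * y1 t) idB repB φ φ1 d0 (c1.continuous) z00 z01
  have S7 : (∫ x in (0:ℝ)..1, y0 x * φ1 x) = - ∫ x in (0:ℝ)..1, y1 x * φ x :=
    reg_ibp y1 y0 hi1 hy0 φ φ1 d0 (c1.continuous) z00 z01
  -- integrability of all the individual products
  have cφ0 := c0.continuous.continuousOn (s := Set.uIcc (0:ℝ) 1)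
  have cφ1 := c1.continuous.continuousOn (s := Set.uIcc (0:ℝ) 1)
  have cφ2 := c2.continuous.continuousOn (s := Set.uIcc (0:ℝ) 1)
  have i_a22 : IntervalIntegrable (fun x => y2 x * φ2 x) volume 0 1 :=
    (cy2.mul cφ2).intervalIntegrable
  have i_aA2 : IntervalIntegrable (fun x => (σ₁ x + σ₀ x) * y0 x * φ2 x) volume 0 1 :=
    (((cσ₁.add cσ₀).mul cy0).mul cφ2).intervalIntegrable
  have i_a31 : IntervalIntegrable (fun x => y3 x * φ1 x) volume 0 1 :=
    (cy3.mul cφ1).intervalIntegrable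
  have i_aT : IntervalIntegrable (fun x => τ₂ x * y1 x * φ1 x) volume 0 1 :=
    ((cτ₂.mul cy1).mul cφ1).intervalIntegrable
  have i_aσ₀1 : IntervalIntegrable (fun x => σ₀ x * y1 x * φ1 x) volume 0 1 :=
    ((cσ₀.mul cy1).mul cφ1).intervalIntegrable
  have i_aσ₁1 : IntervalIntegrable (fun x => σ₁ x * y1 x * φ1 x) volume 0 1 :=
    ((cσ₁.mul cy1).mul cφ1).intervalIntegrable
  have i_a40 : IntervalIntegrable (fun x => y4 x * φ x) volume 0 1 :=
    hi4.mul_continuousOn cφ0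
  have i_aP : IntervalIntegrable (fun x => (σ₀ x ^ 2 - σ₁ x ^ 2) * y0 x * φ x) volume 0 1 :=
    ((((cσ₀.pow 2).sub (cσ₁.pow 2)).mul cy0).mul cφ0).intervalIntegrable
  have i_aQ : IntervalIntegrable (fun x => (σ₁ x - σ₀ x) * y2 x * φ x) volume 0 1 :=
    (((cσ₁.sub cσ₀).mul cy2).mul cφ0).intervalIntegrable
  have i_aτ₁0 : IntervalIntegrable (fun x => τ₁ x * y0 x * φ1 x) volume 0 1 :=
    (iτ₁.mul_continuousOn cy0).mul_continuousOn cφ1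
  have i_ar₀0 : IntervalIntegrable (fun x => r₀ x * y0 x * φ1 x) volume 0 1 :=
    (ir₀.mul_continuousOn cy0).mul_continuousOn cφ1
  have i_a0φ1 : IntervalIntegrable (fun x => y0 x * φ1 x) volume 0 1 :=
    (cy0.mul cφ1).intervalIntegrable
  have i_aτ₁1 : IntervalIntegrable (fun x => τ₁ x * y1 x * φ x) volume 0 1 :=
    (iτ₁.mul_continuousOn cy1).mul_continuousOn cφ0
  have i_ar₀1 : IntervalIntegrable (fun x => r₀ x * y1 x * φ x) volume 0 1 :=
    (ir₀.mul_continuousOn cy1).mul_continuousOn cφ0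
  have i_a1φ : IntervalIntegrable (fun x => y1 x * φ x) volume 0 1 :=
    (cy1.mul cφ0).intervalIntegrable
  -- expansions of the composite integrals
  have E2 : (∫ x in (0:ℝ)..1, (y2 x - (σ₁ x + σ₀ x) * y0 x) * φ2 x)
      = (∫ x in (0:ℝ)..1, y2 x * φ2 x)
        - ∫ x in (0:ℝ)..1, (σ₁ x + σ₀ x) * y0 x * φ2 x := by
    rw [← integral_sub i_a22 i_aA2]
    exact integral_congr fun x _ => by ring
  have E3 : (∫ x in (0:ℝ)..1, (y3 x - (τ₂ x - 2 * σ₀ x) * y1 x) * φ1 x)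
      = (∫ x in (0:ℝ)..1, y3 x * φ1 x) - (∫ x in (0:ℝ)..1, τ₂ x * y1 x * φ1 x)
        + 2 * ∫ x in (0:ℝ)..1, σ₀ x * y1 x * φ1 x := by
    have h : (∫ x in (0:ℝ)..1, y3 x * φ1 x) - (∫ x in (0:ℝ)..1, τ₂ x * y1 x * φ1 x)
        + 2 * (∫ x in (0:ℝ)..1, σ₀ x * y1 x * φ1 x)
        = ∫ x in (0:ℝ)..1,
            (y3 x * φ1 x - τ₂ x * y1 x * φ1 x + 2 * (σ₀ x * y1 x * φ1 x)) := by
      rw [integral_add (i_a31.sub i_aT) (i_aσ₀1.const_mul 2), integral_sub i_a31 i_aT,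
        intervalIntegral.integral_const_mul]
    rw [h]
    exact integral_congr fun x _ => by ring
  have E4 : (∫ x in (0:ℝ)..1,
        (y4 x + (σ₀ x ^ 2 - σ₁ x ^ 2) * y0 x + (σ₁ x - σ₀ x) * y2 x) * φ x)
      = (∫ x in (0:ℝ)..1, y4 x * φ x)
        + (∫ x in (0:ℝ)..1, (σ₀ x ^ 2 - σ₁ x ^ 2) * y0 x * φ x)
        + ∫ x in (0:ℝ)..1, (σ₁ x - σ₀ x) * y2 x * φ x := by
    rw [← integral_add i_a40 i_aP, ← integral_add (i_a40.add i_aP) i_aQ]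
    exact integral_congr fun x _ => by ring
  have E5 : (∫ x in (0:ℝ)..1,
        ((τ₁ x + (r₀ x - C)) * y0 x + (σ₁ x + σ₀ x) * y1 x) * φ1 x)
      = (∫ x in (0:ℝ)..1, τ₁ x * y0 x * φ1 x) + (∫ x in (0:ℝ)..1, r₀ x * y0 x * φ1 x)
        - C * (∫ x in (0:ℝ)..1, y0 x * φ1 x)
        + (∫ x in (0:ℝ)..1, σ₁ x * y1 x * φ1 x)
        + ∫ x in (0:ℝ)..1, σ₀ x * y1 x * φ1 x := by
    have h : (∫ x in (0:ℝ)..1, τ₁ x * y0 x * φ1 x) + (∫ x in (0:ℝ)..1, r₀ x * y0 x * φ1 x)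
        - C * (∫ x in (0:ℝ)..1, y0 x * φ1 x)
        + (∫ x in (0:ℝ)..1, σ₁ x * y1 x * φ1 x)
        + (∫ x in (0:ℝ)..1, σ₀ x * y1 x * φ1 x)
        = ∫ x in (0:ℝ)..1, (τ₁ x * y0 x * φ1 x + r₀ x * y0 x * φ1 x
            - C * (y0 x * φ1 x) + σ₁ x * y1 x * φ1 x + σ₀ x * y1 x * φ1 x) := by
      rw [integral_add ((((i_aτ₁0.add i_ar₀0).sub (i_a0φ1.const_mul C)).add i_aσ₁1)) i_aσ₀1,
        integral_add (((i_aτ₁0.add i_ar₀0).sub (i_a0φ1.const_mul C))) i_aσ₁1,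
        integral_sub (i_aτ₁0.add i_ar₀0) (i_a0φ1.const_mul C),
        integral_add i_aτ₁0 i_ar₀0, intervalIntegral.integral_const_mul]
    rw [h]
    exact integral_congr fun x _ => by ring
  have E6 : (∫ x in (0:ℝ)..1,
        ((τ₁ x - (r₀ x - C)) * y1 x
          + (σ₁ x - σ₀ x) * (y2 x - (σ₁ x + σ₀ x) * y0 x)) * φ x)
      = (∫ x in (0:ℝ)..1, τ₁ x * y1 x * φ x) - (∫ x in (0:ℝ)..1, r₀ x * y1 x * φ x)
        + C * (∫ x in (0:ℝ)..1, y1 x * φ x)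
        + (∫ x in (0:ℝ)..1, (σ₁ x - σ₀ x) * y2 x * φ x)
        + ∫ x in (0:ℝ)..1, (σ₀ x ^ 2 - σ₁ x ^ 2) * y0 x * φ x := by
    have h : (∫ x in (0:ℝ)..1, τ₁ x * y1 x * φ x) - (∫ x in (0:ℝ)..1, r₀ x * y1 x * φ x)
        + C * (∫ x in (0:ℝ)..1, y1 x * φ x)
        + (∫ x in (0:ℝ)..1, (σ₁ x - σ₀ x) * y2 x * φ x)
        + (∫ x in (0:ℝ)..1, (σ₀ x ^ 2 - σ₁ x ^ 2) * y0 x * φ x)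
        = ∫ x in (0:ℝ)..1, (τ₁ x * y1 x * φ x - r₀ x * y1 x * φ x
            + C * (y1 x * φ x) + (σ₁ x - σ₀ x) * y2 x * φ x
            + (σ₀ x ^ 2 - σ₁ x ^ 2) * y0 x * φ x) := by
      rw [integral_add ((((i_aτ₁1.sub i_ar₀1).add (i_a1φ.const_mul C)).add i_aQ)) i_aP,
        integral_add (((i_aτ₁1.sub i_ar₀1).add (i_a1φ.const_mul C))) i_aQ,
        integral_add ((i_aτ₁1.sub i_ar₀1)) (i_a1φ.const_mul C),
        integral_sub i_aτ₁1 i_ar₀1, intervalIntegral.integral_const_mul]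
    rw [h]
    exact integral_congr fun x _ => by ring
  have E7 : (∫ x in (0:ℝ)..1, (σ₁ x - σ₀ x) * y1 x * φ1 x)
      = (∫ x in (0:ℝ)..1, σ₁ x * y1 x * φ1 x)
        - ∫ x in (0:ℝ)..1, σ₀ x * y1 x * φ1 x := by
    rw [← integral_sub i_aσ₁1 i_aσ₀1]
    exact integral_congr fun x _ => by ring
  have ER : (∫ x in (0:ℝ)..1, r₀ x * (y1 x * φ x + y0 x * φ1 x))
      = (∫ x in (0:ℝ)..1, r₀ x * y1 x * φ x)
        + ∫ x in (0:ℝ)..1, r₀ x * y0 x * φ1 x := by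
    rw [← integral_add i_ar₀1 i_ar₀0]
    exact integral_congr fun x _ => by ring
  linear_combination S1 - S2 + E2 + S3 - E3 - S4 + E4 - S5 + E5 - E7 + S6 - E6 - C * S7 - ER
end

section
/- Let F be the matrix function built from the data (r₀, τ₁, τ₂) and let F̃ be the matrix function built in the same way from the data (conj(r₀), −conj(τ₁), conj(τ₂)) (i.e., with σ̃₀ = conj(σ₀) and σ̃₁ = −conj(σ₁)). Then a complex number λ is an eigenvalue of the problem 𝓛₁ for F (i.e., there is a nonzero C¹ solution y of y' = (F+Λ(λ))y on [0,1] with y₁(0) = 0, y₁(1) = y₂(1) = y₃(1) = 0) if and only if conj(λ) is an eigenvalue of the problem 𝓛₃ for F̃ (i.e., there is a nonzero C¹ solution z of z' = (F̃+Λ(conj λ))z on [0,1] with z₁(0) = z₂(0) = z₃(0) = 0, z₁(1) = 0). -/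
open MeasureTheory Set

/-- The associated matrix `F(x)` built from the data `(r₀, τ₁, τ₂)`, where
`σ₁(x) = ∫₀ˣ τ₁` and `σ₀(x) = ∫₀ˣ r₀ − x∫₀¹ r₀`. -/
noncomputable def assocF (r₀ τ₁ τ₂ : ℝ → ℂ) (x : ℝ) : Matrix (Fin 4) (Fin 4) ℂ :=
  let σ₁ : ℂ := ∫ t in (0:ℝ)..x, τ₁ t
  let σ₀ : ℂ := (∫ t in (0:ℝ)..x, r₀ t) - x * ∫ t in (0:ℝ)..(1:ℝ), r₀ t
  !![0, 1, 0, 0;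
     -(σ₁ + σ₀), 0, 1, 0;
     0, -τ₂ x + 2 * σ₀, 0, 1;
     σ₀ ^ 2 - σ₁ ^ 2, 0, σ₁ - σ₀, 0]

/-- The matrix `Λ(λ)` whose only nonzero entry is `λ` in position `(4,1)`. -/
noncomputable def lamMat (l : ℂ) : Matrix (Fin 4) (Fin 4) ℂ :=
  Matrix.of fun i j => if i = 3 ∧ j = 0 then l else 0

/-- `λ` is an eigenvalue of the problem `𝓛₁` for the data `(r₀, τ₁, τ₂)`. -/
noncomputable def IsEigenL1 (r₀ τ₁ τ₂ : ℝ → ℂ) (l : ℂ) : Prop :=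
  ∃ y : ℝ → Fin 4 → ℂ,
    (∀ x ∈ Set.Icc (0:ℝ) 1, HasDerivWithinAt y
      ((assocF r₀ τ₁ τ₂ x + lamMat l).mulVec (y x)) (Set.Icc (0:ℝ) 1) x) ∧
    (∃ x ∈ Set.Icc (0:ℝ) 1, y x ≠ 0) ∧
    y (0:ℝ) 0 = 0 ∧ y (1:ℝ) 0 = 0 ∧ y (1:ℝ) 1 = 0 ∧ y (1:ℝ) 2 = 0

/-- `λ` is an eigenvalue of the problem `𝓛₃` for the data `(r₀, τ₁, τ₂)`. -/
noncomputable def IsEigenL3 (r₀ τ₁ τ₂ : ℝ → ℂ) (l : ℂ) : Prop :=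
  ∃ y : ℝ → Fin 4 → ℂ,
    (∀ x ∈ Set.Icc (0:ℝ) 1, HasDerivWithinAt y
      ((assocF r₀ τ₁ τ₂ x + lamMat l).mulVec (y x)) (Set.Icc (0:ℝ) 1) x) ∧
    (∃ x ∈ Set.Icc (0:ℝ) 1, y x ≠ 0) ∧
    y (0:ℝ) 0 = 0 ∧ y (0:ℝ) 1 = 0 ∧ y (0:ℝ) 2 = 0 ∧ y (1:ℝ) 0 = 0

/-!
For a solution `y` of `y' = A y` (with `A = F + Λ(λ)`) and a solution `z` of the adjoint system
`z' = Ã z`, the boundary form `z* J y`, with `J` the signed anti-diagonal matrix, is constant on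
`[0,1]`, because `Ã* J + J A = 0`. Given an eigenfunction `y` of `𝓛₁`, solve the adjoint system
with `z(0) = e₄`. At `0` the form equals `-y₁(0) = 0`; at `1` it equals `conj (z₁(1)) y₄(1)`, and
`y₄(1) ≠ 0` since otherwise `y(1) = 0` and `y ≡ 0` by uniqueness. Hence `z₁(1) = 0`, and `z` is
an eigenfunction of `𝓛₃`. The converse is symmetric, starting from `y(1) = e₄`.

Linear systems with continuous coefficients are solvable on all of `[a,b]`: Picard–Lindelöf gives
solutions on subintervals of length `≲ 1 / sup ‖B‖`, which are glued together.
-/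

open scoped NNReal

section LinearODE

variable {E : Type*} [NormedAddCommGroup E] [NormedSpace ℝ E]

def IsSolutionOn (v : ℝ → E → E) (y : ℝ → E) (s : Set ℝ) : Prop :=
  ∀ t ∈ s, HasDerivWithinAt y (v t (y t)) s t

theorem IsSolutionOn.continuousOn {v : ℝ → E → E} {y : ℝ → E} {s : Set ℝ}
    (hy : IsSolutionOn v y s) : ContinuousOn y s :=
  fun t ht => (hy t ht).continuousWithinAt

theorem IsSolutionOn.piecewise_Icc {v : ℝ → E → E} {y z : ℝ → E} {a c d : ℝ}
    (hy : IsSolutionOn v y (Icc a c)) (hz : IsSolutionOn v z (Icc c d)) (hyz : y c = z c)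
    (hac : a ≤ c) (hcd : c ≤ d) :
    IsSolutionOn v (fun t => if t ≤ c then y t else z t) (Icc a d) := by
  set w : ℝ → E := fun t => if t ≤ c then y t else z t
  have hwy : EqOn w y (Icc a c) := fun t ht => if_pos ht.2
  have hwz : EqOn w z (Icc c d) := fun t ht => by
    rcases ht.1.eq_or_lt with rfl | hct
    · exact (if_pos le_rfl).trans hyz
    · exact if_neg hct.not_ge
  intro t _
  rw [← Icc_union_Icc_eq_Icc hac hcd]
  refine HasDerivWithinAt.union ?_ ?_
  · by_cases ht : t ∈ Icc a c
    · rw [hwy ht]; exact (hy t ht).congr_of_mem hwy ht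
    · exact HasFDerivWithinAt.of_notMem_closure (by rwa [closure_Icc])
  · by_cases ht : t ∈ Icc c d
    · rw [hwz ht]; exact (hz t ht).congr_of_mem hwz ht
    · exact HasFDerivWithinAt.of_notMem_closure (by rwa [closure_Icc])

theorem IsSolutionOn.comp_reflect {v : ℝ → E → E} {y : ℝ → E} {a b : ℝ}
    (hy : IsSolutionOn v y (Icc a b)) :
    IsSolutionOn (fun t x => -v (a + b - t) x) (fun t => y (a + b - t)) (Icc a b) := by
  intro t ht
  have hmaps : MapsTo (fun u : ℝ => a + b - u) (Icc a b) (Icc a b) := fun u hu =>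
    ⟨by linarith [hu.2], by linarith [hu.1]⟩
  have h := (hy _ (hmaps ht)).scomp t ((hasDerivAt_id t).const_sub (a + b)).hasDerivWithinAt hmaps
  convert h using 1
  · rfl
  · rw [neg_one_smul]

variable {B : ℝ → E →L[ℝ] E} {a b : ℝ}

theorem ContinuousOn.exists_nnnorm_le_Icc (hB : ContinuousOn B (Icc a b)) :
    ∃ K : ℝ≥0, ∀ t ∈ Icc a b, ‖B t‖₊ ≤ K := by
  obtain ⟨C, hC⟩ := isCompact_Icc.exists_bound_of_continuousOn hB
  exact ⟨C.toNNReal, fun t ht => by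
    rw [← NNReal.coe_le_coe, coe_nnnorm]; exact (hC t ht).trans (Real.le_coe_toNNReal C)⟩

theorem exists_isSolutionOn_Icc_of_short [CompleteSpace E] {K : ℝ≥0} (hab : a ≤ b)
    (hB : ContinuousOn B (Icc a b)) (hK : ∀ t ∈ Icc a b, ‖B t‖₊ ≤ K)
    (hsmall : 2 * K * (b - a) ≤ 1) (ξ : E) :
    ∃ y : ℝ → E, y a = ξ ∧ IsSolutionOn (fun t => B t) y (Icc a b) := by
  have hPL : IsPicardLindelof (fun t => B t) (⟨a, left_mem_Icc.2 hab⟩ : Icc a b) ξ ‖ξ‖₊ 0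
      (2 * K * ‖ξ‖₊) K := by
    refine ⟨fun t ht => ((B t).lipschitz.weaken (hK t ht)).lipschitzOnWith,
      fun x _ => hB.clm_apply continuousOn_const, fun t ht x hx => ?_, ?_⟩
    · have hx' : ‖x‖ ≤ 2 * ‖ξ‖ := by
        linarith [norm_le_of_mem_closedBall hx, show ((‖ξ‖₊ : ℝ≥0) : ℝ) = ‖ξ‖ from rfl]
      calc ‖B t x‖ ≤ ‖B t‖ * ‖x‖ := (B t).le_opNorm x
        _ ≤ K * (2 * ‖ξ‖) := mul_le_mul (hK t ht) hx' (norm_nonneg _) K.2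
        _ = _ := by push_cast; ring
    · simp only [NNReal.coe_mul, NNReal.coe_ofNat, coe_nnnorm, sub_self, NNReal.coe_zero,
        sub_zero, max_eq_left (sub_nonneg.2 hab)]
      nlinarith [norm_nonneg ξ]
  exact hPL.exists_eq_forall_mem_Icc_hasDerivWithinAt₀

theorem exists_isSolutionOn_Icc_left [CompleteSpace E] (hab : a ≤ b)
    (hB : ContinuousOn B (Icc a b)) (ξ : E) :
    ∃ y : ℝ → E, y a = ξ ∧ IsSolutionOn (fun t => B t) y (Icc a b) := by
  obtain ⟨K, hK⟩ := hB.exists_nnnorm_le_Icc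
  set h : ℝ := 1 / (2 * K + 1)
  have hh : 0 < h := by positivity
  have hKh : 2 * K * h ≤ 1 := by
    rw [mul_one_div, div_le_one (by positivity)]; linarith
  suffices ∀ n : ℕ, ∀ e ∈ Icc a b, e - a ≤ n * h →
      ∃ y : ℝ → E, y a = ξ ∧ IsSolutionOn (fun t => B t) y (Icc a e) by
    obtain ⟨n, hn⟩ := exists_nat_ge ((b - a) / h)
    exact this n b ⟨hab, le_rfl⟩ ((div_le_iff₀ hh).1 hn)
  intro n
  induction n with
  | zero =>
    intro e he hea
    exact exists_isSolutionOn_Icc_of_short he.1 (hB.mono (Icc_subset_Icc_right he.2))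
      (fun t ht => hK t ⟨ht.1, ht.2.trans he.2⟩)
      (by simp only [Nat.cast_zero, zero_mul] at hea; nlinarith [K.2]) ξ
  | succ n ih =>
    intro e he hea
    set c := max a (e - h)
    have hac : a ≤ c := le_max_left _ _
    have hce : c ≤ e := max_le he.1 (by linarith)
    have hca : c - a ≤ n * h := by
      rw [sub_le_iff_le_add]
      exact max_le (by nlinarith [n.cast_nonneg (α := ℝ)]) (by push_cast at hea; linarith)
    have hec : 2 * K * (e - c) ≤ 1 :=
      (mul_le_mul_of_nonneg_left (by linarith [le_max_right a (e - h)]) (by positivity)).trans hKh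
    obtain ⟨y, hya, hy⟩ := ih c ⟨hac, hce.trans he.2⟩ hca
    obtain ⟨z, hzc, hz⟩ := exists_isSolutionOn_Icc_of_short hce
      (hB.mono (Icc_subset_Icc hac he.2)) (fun t ht => hK t ⟨hac.trans ht.1, ht.2.trans he.2⟩)
      hec (y c)
    exact ⟨_, by simp [hac, hya], hy.piecewise_Icc hz hzc.symm hac hce⟩

theorem exists_isSolutionOn_Icc_right [CompleteSpace E] (hab : a ≤ b)
    (hB : ContinuousOn B (Icc a b)) (ξ : E) :
    ∃ y : ℝ → E, y b = ξ ∧ IsSolutionOn (fun t => B t) y (Icc a b) := by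
  have hmaps : MapsTo (fun t => a + b - t) (Icc a b) (Icc a b) := fun u hu =>
    ⟨by linarith [hu.2], by linarith [hu.1]⟩
  have hB' : ContinuousOn (fun t => -B (a + b - t)) (Icc a b) :=
    (hB.comp (continuousOn_const.sub continuousOn_id) hmaps).neg
  obtain ⟨z, hza, hz⟩ := exists_isSolutionOn_Icc_left hab hB' ξ
  refine ⟨fun t => z (a + b - t), by simpa using hza, ?_⟩
  simpa using hz.comp_reflect

theorem IsSolutionOn.eqOn_zero_of_eq_zero_left {K : ℝ≥0} (hK : ∀ t ∈ Icc a b, ‖B t‖₊ ≤ K)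
    {y : ℝ → E} (hy : IsSolutionOn (fun t => B t) y (Icc a b)) (ha : y a = 0) :
    EqOn y 0 (Icc a b) :=
  ODE_solution_unique_of_mem_Icc_right (s := fun _ => univ)
    (fun t ht => ((B t).lipschitz.weaken (hK t (Ico_subset_Icc_self ht))).lipschitzOnWith)
    hy.continuousOn
    (fun t ht => (hy t (Ico_subset_Icc_self ht)).mono_of_mem_nhdsWithin
      (Icc_mem_nhdsGE_of_mem ht))
    (fun _ _ => mem_univ _) continuousOn_const
    (fun t _ => by rw [Pi.zero_apply, map_zero]; exact hasDerivWithinAt_const t _ 0)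
    (fun _ _ => mem_univ _) ha

theorem IsSolutionOn.eqOn_zero_of_eq_zero_right {K : ℝ≥0} (hK : ∀ t ∈ Icc a b, ‖B t‖₊ ≤ K)
    {y : ℝ → E} (hy : IsSolutionOn (fun t => B t) y (Icc a b)) (hb : y b = 0) :
    EqOn y 0 (Icc a b) :=
  ODE_solution_unique_of_mem_Icc_left (s := fun _ => univ)
    (fun t ht => ((B t).lipschitz.weaken (hK t (Ioc_subset_Icc_self ht))).lipschitzOnWith)
    hy.continuousOn
    (fun t ht => (hy t (Ioc_subset_Icc_self ht)).mono_of_mem_nhdsWithin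
      (Icc_mem_nhdsLE_of_mem ht))
    (fun _ _ => mem_univ _) continuousOn_const
    (fun t _ => by rw [Pi.zero_apply, map_zero]; exact hasDerivWithinAt_const t _ 0)
    (fun _ _ => mem_univ _) hb

end LinearODE

open scoped ComplexConjugate
open Matrix

section MatrixODE

variable {n : Type*} [Fintype n]

noncomputable def Matrix.mulVecCLM (A : Matrix n n ℂ) : (n → ℂ) →L[ℝ] (n → ℂ) :=
  LinearMap.toContinuousLinearMap (A.mulVecLin.restrictScalars ℝ)

@[simp]
theorem Matrix.coe_mulVecCLM (A : Matrix n n ℂ) : ⇑A.mulVecCLM = (A *ᵥ ·) := rfl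

theorem ContinuousOn.mulVecCLM {X : Type*} [TopologicalSpace X] {A : X → Matrix n n ℂ}
    {s : Set X} (hA : ContinuousOn A s) : ContinuousOn (fun x => (A x).mulVecCLM) s := by
  refine continuousOn_clm_apply.2 fun v => ?_
  rw [continuousOn_iff_continuous_domRestrict] at hA ⊢
  exact hA.matrix_mulVec continuous_const

theorem HasDerivWithinAt.dotProduct {𝔸 : Type*} [NormedCommRing 𝔸] [NormedAlgebra ℝ 𝔸]
    {u v : ℝ → n → 𝔸} {u' v' : n → 𝔸} {s : Set ℝ} {t : ℝ}
    (hu : HasDerivWithinAt u u' s t) (hv : HasDerivWithinAt v v' s t) :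
    HasDerivWithinAt (fun t => u t ⬝ᵥ v t) (u' ⬝ᵥ v t + u t ⬝ᵥ v') s t := by
  have h := HasDerivWithinAt.fun_sum (u := .univ)
    fun i _ => (hasDerivWithinAt_pi.1 hu i).fun_mul (hasDerivWithinAt_pi.1 hv i)
  rwa [Finset.sum_add_distrib] at h

theorem IsSolutionOn.star_dotProduct_mulVec_eq {A Ã : ℝ → Matrix n n ℂ} {J : Matrix n n ℂ}
    {y z : ℝ → n → ℂ} {a b : ℝ} (hab : a ≤ b)
    (hJ : ∀ t ∈ Icc a b, (Ã t)ᴴ * J + J * A t = 0)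
    (hy : IsSolutionOn (fun t => (A t).mulVecCLM) y (Icc a b))
    (hz : IsSolutionOn (fun t => (Ã t).mulVecCLM) z (Icc a b)) :
    star (z b) ⬝ᵥ J *ᵥ y b = star (z a) ⬝ᵥ J *ᵥ y a := by
  have hderiv : ∀ t ∈ Icc a b,
      HasDerivWithinAt (fun t => star (z t) ⬝ᵥ J *ᵥ y t) 0 (Icc a b) t := by
    intro t ht
    have h := (hz t ht).star.dotProduct
      (J.mulVecCLM.hasFDerivAt.comp_hasDerivWithinAt t (hy t ht))
    refine h.congr_deriv ?_
    calc _ = star (z t) ⬝ᵥ ((Ã t)ᴴ * J + J * A t) *ᵥ y t := by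
          rw [add_mulVec, dotProduct_add, ← mulVec_mulVec, ← mulVec_mulVec,
            dotProduct_mulVec (star (z t)) (Ã t)ᴴ, ← star_mulVec]
          rfl
      _ = 0 := by rw [hJ t ht, zero_mulVec, dotProduct_zero]
  exact constant_of_has_deriv_right_zero (fun t ht => (hderiv t ht).continuousWithinAt)
    (fun t ht => (hderiv t (Ico_subset_Icc_self ht)).mono_of_mem_nhdsWithin
      (Icc_mem_nhdsGE_of_mem ht)) b ⟨hab, le_rfl⟩

end MatrixODE

theorem MeasureTheory.MemLp.continuousOn_primitive {E : Type*} [NormedAddCommGroup E]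
    [NormedSpace ℝ E] {f : ℝ → E} {p : ENNReal} (hp : 1 ≤ p) {a b : ℝ} (hab : a ≤ b)
    (hf : MemLp f p (volume.restrict (Ioc a b))) :
    ContinuousOn (fun x => ∫ t in a..x, f t) (Icc a b) := by
  rw [← uIcc_of_le hab]
  refine intervalIntegral.continuousOn_primitive_interval ?_
  rw [uIcc_of_le hab, integrableOn_Icc_iff_integrableOn_Ioc]
  exact hf.integrable hp

section Adjoint

variable (r₀ τ₁ τ₂ : ℝ → ℂ) (l : ℂ)

noncomputable def sigma₁ (x : ℝ) : ℂ := ∫ t in (0:ℝ)..x, τ₁ t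

noncomputable def sigma₀ (x : ℝ) : ℂ :=
  (∫ t in (0:ℝ)..x, r₀ t) - x * ∫ t in (0:ℝ)..(1:ℝ), r₀ t

theorem assocF_eq (x : ℝ) :
    assocF r₀ τ₁ τ₂ x =
      !![0, 1, 0, 0;
         -(sigma₁ τ₁ x + sigma₀ r₀ x), 0, 1, 0;
         0, -τ₂ x + 2 * sigma₀ r₀ x, 0, 1;
         sigma₀ r₀ x ^ 2 - sigma₁ τ₁ x ^ 2, 0, sigma₁ τ₁ x - sigma₀ r₀ x, 0] := rfl

theorem sigma₀_conj (x : ℝ) : sigma₀ (fun t => conj (r₀ t)) x = conj (sigma₀ r₀ x) := by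
  simp [sigma₀, intervalIntegral.intervalIntegral_conj]

theorem sigma₁_neg_conj (x : ℝ) : sigma₁ (fun t => -conj (τ₁ t)) x = -conj (sigma₁ τ₁ x) := by
  simp [sigma₁, intervalIntegral.integral_neg, intervalIntegral.intervalIntegral_conj]

theorem lamMat_eq : lamMat l = !![0, 0, 0, 0; 0, 0, 0, 0; 0, 0, 0, 0; l, 0, 0, 0] := by
  ext i j
  fin_cases i <;> fin_cases j <;> rfl

noncomputable def systemMatrix (x : ℝ) : Matrix (Fin 4) (Fin 4) ℂ := assocF r₀ τ₁ τ₂ x + lamMat l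

noncomputable def adjointSystemMatrix (x : ℝ) : Matrix (Fin 4) (Fin 4) ℂ :=
  systemMatrix (fun t => conj (r₀ t)) (fun t => -conj (τ₁ t)) (fun t => conj (τ₂ t)) (conj l) x

variable {r₀ τ₁ τ₂} in
theorem continuousOn_systemMatrix {s : Set ℝ} (h₀ : ContinuousOn (sigma₀ r₀) s)
    (h₁ : ContinuousOn (sigma₁ τ₁) s) (h₂ : ContinuousOn τ₂ s) :
    ContinuousOn (systemMatrix r₀ τ₁ τ₂ l) s := by
  refine continuousOn_pi.2 fun i => continuousOn_pi.2 fun j => ?_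
  fin_cases i <;> fin_cases j <;> simp [systemMatrix, assocF_eq, lamMat] <;> fun_prop

variable {r₀ τ₁ τ₂} in
theorem continuousOn_adjointSystemMatrix {s : Set ℝ} (h₀ : ContinuousOn (sigma₀ r₀) s)
    (h₁ : ContinuousOn (sigma₁ τ₁) s) (h₂ : ContinuousOn τ₂ s) :
    ContinuousOn (adjointSystemMatrix r₀ τ₁ τ₂ l) s := by
  refine continuousOn_systemMatrix _ ?_ ?_ (Complex.continuous_conj.comp_continuousOn h₂)
  · simp only [funext (sigma₀_conj r₀)]
    exact Complex.continuous_conj.comp_continuousOn h₀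
  · simp only [funext (sigma₁_neg_conj τ₁)]
    exact (Complex.continuous_conj.comp_continuousOn h₁).neg

def pairingMatrix : Matrix (Fin 4) (Fin 4) ℂ :=
  !![0, 0, 0, 1;
     0, 0, -1, 0;
     0, 1, 0, 0;
     -1, 0, 0, 0]

theorem star_dotProduct_pairingMatrix_mulVec (z y : Fin 4 → ℂ) :
    star z ⬝ᵥ pairingMatrix *ᵥ y =
      conj (z 0) * y 3 - conj (z 1) * y 2 + conj (z 2) * y 1 - conj (z 3) * y 0 := by
  simp [pairingMatrix, dotProduct, Fin.sum_univ_four, mulVec]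
  ring

theorem adjointSystemMatrix_conjTranspose_mul_add (x : ℝ) :
    (adjointSystemMatrix r₀ τ₁ τ₂ l x)ᴴ * pairingMatrix
      + pairingMatrix * systemMatrix r₀ τ₁ τ₂ l x = 0 := by
  rw [adjointSystemMatrix, systemMatrix, systemMatrix, assocF_eq, assocF_eq, sigma₀_conj,
    sigma₁_neg_conj, lamMat_eq, lamMat_eq]
  ext i j
  fin_cases i <;> fin_cases j <;>
    simp [pairingMatrix, Matrix.mul_apply, Fin.sum_univ_four, map_ofNat] <;> ring

end Adjoint

section Transfer

variable {r₀ τ₁ τ₂ : ℝ → ℂ} {l : ℂ}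

theorem IsEigenL1.isEigenL3_adjoint
    (hA : ContinuousOn (systemMatrix r₀ τ₁ τ₂ l) (Icc 0 1))
    (hÃ : ContinuousOn (adjointSystemMatrix r₀ τ₁ τ₂ l) (Icc 0 1))
    (h : IsEigenL1 r₀ τ₁ τ₂ l) :
    IsEigenL3 (fun t => conj (r₀ t)) (fun t => -conj (τ₁ t)) (fun t => conj (τ₂ t)) (conj l) := by
  obtain ⟨y, hy, ⟨x₀, hx₀, hy_ne⟩, hy00, hy10, hy11, hy12⟩ := h
  obtain ⟨z, hz0, hz⟩ := exists_isSolutionOn_Icc_left zero_le_one hÃ.mulVecCLM (Pi.single 3 1)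
  obtain ⟨K, hK⟩ := hA.mulVecCLM.exists_nnnorm_le_Icc
  have hy13 : y 1 3 ≠ 0 := fun hy13 => hy_ne <|
    IsSolutionOn.eqOn_zero_of_eq_zero_right hK hy (by ext i; fin_cases i <;> assumption) hx₀
  have hpair := IsSolutionOn.star_dotProduct_mulVec_eq zero_le_one
    (fun t _ => adjointSystemMatrix_conjTranspose_mul_add r₀ τ₁ τ₂ l t) hy hz
  simp only [star_dotProduct_pairingMatrix_mulVec, hz0, hy00, hy10, hy11, hy12] at hpair
  refine ⟨z, hz, ⟨0, left_mem_Icc.2 zero_le_one, by simp [hz0]⟩, by simp [hz0], by simp [hz0],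
    by simp [hz0], ?_⟩
  simpa [hy13] using hpair

theorem IsEigenL3.isEigenL1_of_adjoint
    (hA : ContinuousOn (systemMatrix r₀ τ₁ τ₂ l) (Icc 0 1))
    (hÃ : ContinuousOn (adjointSystemMatrix r₀ τ₁ τ₂ l) (Icc 0 1))
    (h : IsEigenL3 (fun t => conj (r₀ t)) (fun t => -conj (τ₁ t)) (fun t => conj (τ₂ t))
      (conj l)) :
    IsEigenL1 r₀ τ₁ τ₂ l := by
  obtain ⟨z, hz, ⟨x₀, hx₀, hz_ne⟩, hz00, hz01, hz02, hz10⟩ := h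
  obtain ⟨y, hy1, hy⟩ := exists_isSolutionOn_Icc_right zero_le_one hA.mulVecCLM (Pi.single 3 1)
  obtain ⟨K, hK⟩ := hÃ.mulVecCLM.exists_nnnorm_le_Icc
  have hz03 : z 0 3 ≠ 0 := fun hz03 => hz_ne <|
    IsSolutionOn.eqOn_zero_of_eq_zero_left hK hz (by ext i; fin_cases i <;> assumption) hx₀
  have hpair := IsSolutionOn.star_dotProduct_mulVec_eq zero_le_one
    (fun t _ => adjointSystemMatrix_conjTranspose_mul_add r₀ τ₁ τ₂ l t) hy hz
  simp only [star_dotProduct_pairingMatrix_mulVec, hy1, hz00, hz01, hz02, hz10] at hpair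
  refine ⟨y, hy, ⟨1, right_mem_Icc.2 zero_le_one, by simp [hy1]⟩, ?_, by simp [hy1],
    by simp [hy1], by simp [hy1]⟩
  simpa [hz03] using hpair

end Transfer

/-- `λ` is an eigenvalue of `𝓛₁` for the data `(r₀, τ₁, τ₂)` iff `conj λ`
is an eigenvalue of `𝓛₃` for the adjoint data `(conj r₀, −conj τ₁, conj τ₂)`. -/
theorem eigen_L1_iff_eigen_L3_adjoint
    (r₀ τ₁ τ₂ dτ₂ : ℝ → ℂ)
    (hr₀ : MemLp r₀ 2 (volume.restrict (Set.Ioc (0:ℝ) 1)))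
    (hτ₁ : MemLp τ₁ 2 (volume.restrict (Set.Ioc (0:ℝ) 1)))
    (hdτ₂ : MemLp dτ₂ 2 (volume.restrict (Set.Ioc (0:ℝ) 1)))
    (hτ₂ : ∀ x ∈ Set.Icc (0:ℝ) 1, τ₂ x = τ₂ 0 + ∫ t in (0:ℝ)..x, dτ₂ t)
    (l : ℂ) :
    IsEigenL1 r₀ τ₁ τ₂ l ↔
      IsEigenL3 (fun t => starRingEnd ℂ (r₀ t)) (fun t => -starRingEnd ℂ (τ₁ t))
        (fun t => starRingEnd ℂ (τ₂ t)) (starRingEnd ℂ l) := by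
  have h₀ : ContinuousOn (sigma₀ r₀) (Icc 0 1) :=
    (hr₀.continuousOn_primitive one_le_two zero_le_one).sub (by fun_prop)
  have h₁ : ContinuousOn (sigma₁ τ₁) (Icc 0 1) := hτ₁.continuousOn_primitive one_le_two zero_le_one
  have h₂ : ContinuousOn τ₂ (Icc 0 1) :=
    (continuousOn_const.add (hdτ₂.continuousOn_primitive one_le_two zero_le_one)).congr hτ₂
  have hA := continuousOn_systemMatrix l h₀ h₁ h₂
  have hÃ := continuousOn_adjointSystemMatrix l h₀ h₁ h₂
  exact ⟨fun h => h.isEigenL3_adjoint hA hÃ, fun h => h.isEigenL1_of_adjoint hA hÃ⟩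
end

section
/- Let λ ∈ ℂ. The boundary value problem y''''(x) = λy(x) on [0,1], y(0) = y'(0) = y''(0) = 0, y(1) = 0, has a nonzero four-times continuously differentiable solution y : [0,1] → ℂ if and only if Σ_{k=0}^∞ λᵏ/(4k+3)! = 0. -/
/-!
Every solution of `y'''' = λ y` with `y(0) = y'(0) = y''(0) = 0` is a multiple of
`φ(x) = Σ λᵏ x^(4k+3)/(4k+3)!`: termwise differentiation shows that `φ` is a solution with
`φ'''(0) = 1`, and a solution of a linear equation of order `n + 1` is determined by its first
`n + 1` derivatives at the left endpoint, by uniqueness (Grönwall) for the first-order companion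
system. So a nonzero solution with `y(1) = 0` exists iff `φ(1) = Σ λᵏ/(4k+3)!` vanishes.
-/

open Set Metric Nat

section ExpGeneratingFunction

variable {E : Type*} [NormedAddCommGroup E] [NormedSpace ℝ E] {c : ℕ → E} {C M : ℝ}

noncomputable def egf (c : ℕ → E) (x : ℝ) : E := ∑' n, (x ^ n / n !) • c n

@[simp] lemma egf_apply_zero (c : ℕ → E) : egf c 0 = c 0 := by
  rw [egf, tsum_eq_single 0 fun n hn => by simp [hn]]
  simp

omit [NormedSpace ℝ E] in
lemma norm_shift_le (hc : ∀ n, ‖c n‖ ≤ C * M ^ n) (k n : ℕ) : ‖c (n + k)‖ ≤ C * M ^ k * M ^ n := by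
  rw [mul_assoc, ← pow_add, add_comm k]
  exact hc _

lemma hasDerivAt_pow_succ_div_factorial (n : ℕ) (x : ℝ) :
    HasDerivAt (fun x : ℝ => x ^ (n + 1) / (n + 1)!) (x ^ n / n !) x := by
  refine ((hasDerivAt_pow (n + 1) x).div_const ((n + 1)! : ℝ)).congr_deriv ?_
  rw [add_tsub_cancel_right, factorial_succ, cast_mul, mul_div_mul_left _ _ (by positivity)]

lemma norm_pow_div_factorial_smul_le (hc : ∀ n, ‖c n‖ ≤ C * M ^ n) {R x : ℝ} (hx : |x| ≤ R)
    (n : ℕ) : ‖(x ^ n / n !) • c n‖ ≤ C * (R * M) ^ n / n ! :=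
  calc ‖(x ^ n / n !) • c n‖ = |x| ^ n / n ! * ‖c n‖ := by
        rw [norm_smul, norm_div, norm_pow, Real.norm_eq_abs, RCLike.norm_natCast]
    _ ≤ R ^ n / n ! * (C * M ^ n) :=
        mul_le_mul (by gcongr) (hc n) (norm_nonneg _) (by positivity [(abs_nonneg x).trans hx])
    _ = C * (R * M) ^ n / n ! := by ring

lemma summable_mul_pow_div_factorial (C r : ℝ) : Summable fun n => C * r ^ n / n ! :=
  (Real.summable_pow_div_factorial r).mul_left C |>.congr fun _ => (mul_div_assoc ..).symm

variable [CompleteSpace E]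

lemma summable_pow_div_factorial_smul (hc : ∀ n, ‖c n‖ ≤ C * M ^ n) (x : ℝ) :
    Summable fun n => (x ^ n / n !) • c n :=
  .of_norm_bounded (summable_mul_pow_div_factorial C (|x| * M))
    (norm_pow_div_factorial_smul_le hc le_rfl)

lemma egf_eq_add_tsum (hc : ∀ n, ‖c n‖ ≤ C * M ^ n) (x : ℝ) :
    egf c x = c 0 + ∑' n, (x ^ (n + 1) / (n + 1)!) • c (n + 1) := by
  rw [egf, (summable_pow_div_factorial_smul hc x).tsum_eq_zero_add]
  simp

lemma hasDerivAt_tsum_pow_succ_div_factorial_smul (hc : ∀ n, ‖c n‖ ≤ C * M ^ n) (x : ℝ) :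
    HasDerivAt (fun x : ℝ => ∑' n, (x ^ (n + 1) / (n + 1)!) • c n) (egf c x) x := by
  have hx : x ∈ ball (0 : ℝ) (|x| + 1) := by simp
  refine hasDerivAt_tsum_of_isPreconnected (summable_mul_pow_div_factorial C ((|x| + 1) * M))
    isOpen_ball (convex_ball _ _).isPreconnected
    (fun n y _ => (hasDerivAt_pow_succ_div_factorial n y).smul_const (c n))
    (fun n y hy => norm_pow_div_factorial_smul_le hc ?_ n) (mem_ball_self (by positivity))
    (by simp) hx
  simpa [Real.dist_eq] using (mem_ball.1 hy).le

lemma hasDerivAt_egf (hc : ∀ n, ‖c n‖ ≤ C * M ^ n) (x : ℝ) :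
    HasDerivAt (egf c) (egf (fun n => c (n + 1)) x) x := by
  rw [funext (egf_eq_add_tsum hc)]
  exact (hasDerivAt_tsum_pow_succ_div_factorial_smul (norm_shift_le hc 1) x).const_add (c 0)

lemma iteratedDeriv_egf (hc : ∀ n, ‖c n‖ ≤ C * M ^ n) (k : ℕ) :
    iteratedDeriv k (egf c) = egf (fun n => c (n + k)) := by
  induction k generalizing c C with
  | zero => simp
  | succ k ih =>
    rw [iteratedDeriv_succ', funext fun x => (hasDerivAt_egf hc x).deriv, ih (norm_shift_le hc 1)]
    simp only [add_assoc]

lemma contDiff_egf (hc : ∀ n, ‖c n‖ ≤ C * M ^ n) : ContDiff ℝ (⊤ : ℕ∞) (egf c) := by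
  refine contDiff_of_differentiable_iteratedDeriv fun k _ x => ?_
  rw [iteratedDeriv_egf hc]
  exact (hasDerivAt_egf (norm_shift_le hc k) x).differentiableAt

lemma iteratedDerivWithin_egf (hc : ∀ n, ‖c n‖ ≤ C * M ^ n) {s : Set ℝ} (hs : UniqueDiffOn ℝ s)
    {x : ℝ} (hx : x ∈ s) (k : ℕ) :
    iteratedDerivWithin k (egf c) s x = egf (fun n => c (n + k)) x := by
  rw [iteratedDerivWithin_eq_iteratedDeriv hs ((contDiff_egf hc).contDiffAt.of_le
    (WithTop.coe_le_coe.2 le_top)) hx, iteratedDeriv_egf hc]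

end ExpGeneratingFunction

section LinearODE

variable {E : Type*} [NormedAddCommGroup E] [NormedSpace ℝ E] {n : ℕ} {L : E →L[ℝ] E}

def companion (n : ℕ) (L : E →L[ℝ] E) : (Fin (n + 1) → E) →L[ℝ] (Fin (n + 1) → E) :=
  .pi fun i => if h : (i : ℕ) < n then .proj ⟨i + 1, by omega⟩ else L.comp (.proj 0)

lemma hasDerivWithinAt_iteratedDerivWithin_companion {y : ℝ → E} {s : Set ℝ}
    (hs : UniqueDiffOn ℝ s) (hy : ContDiffOn ℝ (n + 1) y s)
    (hode : ∀ x ∈ s, iteratedDerivWithin (n + 1) y s x = L (y x)) {t : ℝ} (ht : t ∈ s) :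
    HasDerivWithinAt (fun t (i : Fin (n + 1)) => iteratedDerivWithin i y s t)
      (companion n L fun i => iteratedDerivWithin i y s t) s t := by
  refine hasDerivWithinAt_pi.2 fun i => ?_
  have hd := ((hy.differentiableOn_iteratedDerivWithin (by exact_mod_cast i.isLt) hs) t ht
    ).hasDerivWithinAt
  rw [← iteratedDerivWithin_succ] at hd
  by_cases hi : (i : ℕ) < n
  · simpa [companion, hi] using hd
  · have hi : (i : ℕ) = n := by omega
    simpa [companion, hi, hode t ht] using hd

theorem linear_ODE_solution_unique {y₁ y₂ : ℝ → E} {a b : ℝ} (hab : a < b)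
    (hy₁ : ContDiffOn ℝ (n + 1) y₁ (Icc a b)) (hy₂ : ContDiffOn ℝ (n + 1) y₂ (Icc a b))
    (hode₁ : ∀ x ∈ Icc a b, iteratedDerivWithin (n + 1) y₁ (Icc a b) x = L (y₁ x))
    (hode₂ : ∀ x ∈ Icc a b, iteratedDerivWithin (n + 1) y₂ (Icc a b) x = L (y₂ x))
    (hinit : ∀ i ≤ n, iteratedDerivWithin i y₁ (Icc a b) a = iteratedDerivWithin i y₂ (Icc a b) a) :
    EqOn y₁ y₂ (Icc a b) := by
  have hs := uniqueDiffOn_Icc hab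
  have hd₁ := fun t ht => hasDerivWithinAt_iteratedDerivWithin_companion hs hy₁ hode₁ (t := t) ht
  have hd₂ := fun t ht => hasDerivWithinAt_iteratedDerivWithin_companion hs hy₂ hode₂ (t := t) ht
  have heq := ODE_solution_unique (v := fun _ => companion n L) (fun _ => (companion n L).lipschitz)
    (fun t ht => (hd₁ t ht).continuousWithinAt)
    (fun t ht => (hd₁ t (Ico_subset_Icc_self ht)).mono_of_mem_nhdsWithin (Icc_mem_nhdsGE_of_mem ht))
    (fun t ht => (hd₂ t ht).continuousWithinAt)
    (fun t ht => (hd₂ t (Ico_subset_Icc_self ht)).mono_of_mem_nhdsWithin (Icc_mem_nhdsGE_of_mem ht))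
    (funext fun i => hinit i (Nat.lt_succ_iff.1 i.isLt))
  intro t ht
  simpa using congrFun (heq ht) 0

end LinearODE

section ModelProblem

/-- `egf (modelCoeff l d)` is the solution of `y'''' = l y` with 3-jet `(0, 0, 0, d)` at `0`. -/
noncomputable def modelCoeff (l d : ℂ) (n : ℕ) : ℂ := if n % 4 = 3 then d * l ^ (n / 4) else 0

variable {l d : ℂ}

lemma norm_modelCoeff_le (n : ℕ) : ‖modelCoeff l d n‖ ≤ ‖d‖ * max 1 ‖l‖ ^ n := by
  unfold modelCoeff
  split_ifs
  · rw [norm_mul, norm_pow]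
    gcongr
    exact (pow_le_pow_left₀ (norm_nonneg l) (le_max_right 1 ‖l‖) _).trans
      (pow_le_pow_right₀ (le_max_left 1 ‖l‖) (Nat.div_le_self n 4))
  · simp only [norm_zero]
    positivity

lemma modelCoeff_add_four (n : ℕ) : modelCoeff l d (n + 4) = l * modelCoeff l d n := by
  simp only [modelCoeff, Nat.add_mod_right, Nat.add_div_right n four_pos, pow_succ]
  split_ifs <;> ring

lemma egf_modelCoeff_apply_one :
    egf (modelCoeff l d) 1 = d * ∑' k : ℕ, l ^ k / ((Nat.factorial (4 * k + 3) : ℕ) : ℂ) := by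
  have hsupp : Function.support (fun n => ((1 : ℝ) ^ n / n !) • modelCoeff l d n) ⊆
      range fun k => 4 * k + 3 := by
    intro n hn
    refine ⟨n / 4, ?_⟩
    by_contra h
    simp only at h
    exact hn (by simp [modelCoeff, show n % 4 ≠ 3 by omega])
  have hinj : Function.Injective fun k : ℕ => 4 * k + 3 := fun a b h => by simpa using h
  rw [egf, ← hinj.tsum_eq hsupp, ← tsum_mul_left]
  congr 1 with k
  simp [modelCoeff, Nat.add_mod, Nat.add_div]
  ring

variable {s : Set ℝ} (hs : UniqueDiffOn ℝ s)
include hs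

lemma iteratedDerivWithin_egf_modelCoeff_apply_zero (h0 : 0 ∈ s) (k : ℕ) :
    iteratedDerivWithin k (egf (modelCoeff l d)) s 0 = modelCoeff l d k := by
  rw [iteratedDerivWithin_egf norm_modelCoeff_le hs h0, egf_apply_zero, zero_add]

lemma iteratedDerivWithin_four_egf_modelCoeff {x : ℝ} (hx : x ∈ s) :
    iteratedDerivWithin 4 (egf (modelCoeff l d)) s x = l * egf (modelCoeff l d) x := by
  simp only [iteratedDerivWithin_egf norm_modelCoeff_le hs hx, modelCoeff_add_four, egf,
    ← tsum_mul_left, Complex.real_smul, mul_left_comm]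

end ModelProblem

/-- The boundary value problem `y'''' = λy` on `[0,1]`,
`y(0) = y'(0) = y''(0) = 0`, `y(1) = 0`, has a nonzero `C⁴` solution iff
`Σ_{k=0}^∞ λᵏ/(4k+3)! = 0`. -/
theorem model_problem_eigenvalue_iff (l : ℂ) :
    (∃ y : ℝ → ℂ,
      ContDiffOn ℝ 4 y (Set.Icc (0:ℝ) 1) ∧
      (∀ x ∈ Set.Icc (0:ℝ) 1,
        iteratedDerivWithin 4 y (Set.Icc (0:ℝ) 1) x = l * y x) ∧
      y 0 = 0 ∧
      iteratedDerivWithin 1 y (Set.Icc (0:ℝ) 1) 0 = 0 ∧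
      iteratedDerivWithin 2 y (Set.Icc (0:ℝ) 1) 0 = 0 ∧
      y 1 = 0 ∧
      (∃ x ∈ Set.Icc (0:ℝ) 1, y x ≠ 0)) ↔
    (∑' k : ℕ, l ^ k / ((Nat.factorial (4 * k + 3) : ℕ) : ℂ)) = 0 := by
  have hs : UniqueDiffOn ℝ (Icc (0 : ℝ) 1) := uniqueDiffOn_Icc zero_lt_one
  have h0 : (0 : ℝ) ∈ Icc (0 : ℝ) 1 := left_mem_Icc.2 zero_le_one
  have hsol (d : ℂ) : ContDiffOn ℝ 4 (egf (modelCoeff l d)) (Icc 0 1) :=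
    (contDiff_egf norm_modelCoeff_le).contDiffOn.of_le (WithTop.coe_le_coe.2 le_top)
  constructor
  · rintro ⟨y, hy, hode, hy0, hy1, hy2, hy1', x₀, hx₀, hyx₀⟩
    set d := iteratedDerivWithin 3 y (Icc 0 1) 0
    have heq : EqOn y (egf (modelCoeff l d)) (Icc 0 1) :=
      linear_ODE_solution_unique (n := 3) (L := ContinuousLinearMap.mul ℝ ℂ l) zero_lt_one hy
        (hsol d) hode (fun x hx => iteratedDerivWithin_four_egf_modelCoeff hs hx) fun i hi => by
          rw [iteratedDerivWithin_egf_modelCoeff_apply_zero hs h0]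
          interval_cases i <;> simp [modelCoeff, hy0, hy1, hy2, d]
    have hd : d ≠ 0 := fun hd => hyx₀ (by simp [heq hx₀, hd, modelCoeff, egf])
    have h1 := heq (right_mem_Icc.2 zero_le_one)
    rw [hy1', egf_modelCoeff_apply_one] at h1
    exact (mul_eq_zero.1 h1.symm).resolve_left hd
  · intro hl
    refine ⟨egf (modelCoeff l 1), hsol 1, fun x hx => iteratedDerivWithin_four_egf_modelCoeff hs hx,
      ?_, ?_, ?_, by rw [egf_modelCoeff_apply_one, hl, mul_zero], ?_⟩
    · simp [modelCoeff]
    · simp [iteratedDerivWithin_egf_modelCoeff_apply_zero hs h0, modelCoeff]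
    · simp [iteratedDerivWithin_egf_modelCoeff_apply_zero hs h0, modelCoeff]
    · by_contra! h
      have h3 := iteratedDerivWithin_congr (n := 3) (fun x hx => h x hx : EqOn _ 0 _) h0
      simp [iteratedDerivWithin_egf_modelCoeff_apply_zero hs h0, modelCoeff] at h3
end

section
/- For every complex number λ with |λ| ≤ 625, Σ_{k=0}^∞ λᵏ/(4k+3)! ≠ 0. Equivalently, sinh ρ ≠ sin ρ for every ρ ∈ ℂ with 0 < |ρ| ≤ 5. -/
/-!
Split `h(λ) = 1/3! + Σ_{k ≥ 1} λᵏ/(4k+3)!`. Since `(4k+7)! ≥ 7! · 8^{4k}`, for `|λ| ≤ 625` the tail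
is dominated by the geometric series `(625/7!) Σ (625/8⁴)ᵏ ≈ 0.146 < 1/6`, so `h(λ) ≠ 0`.
The series of `sinh` and `sin` differ exactly in the odd powers `z^{4k+3}`, which gives
`sinh ρ − sin ρ = 2ρ³ h(ρ⁴)`, and the second claim follows from the first.
-/

open Complex
open scoped Nat

theorem tsum_ne_zero_of_norm_tail_le {E : Type*} [NormedAddCommGroup E] [CompleteSpace E]
    {f : ℕ → E} {g : ℕ → ℝ} {s : ℝ} (hg : HasSum g s) (hfg : ∀ k, ‖f (k + 1)‖ ≤ g k)
    (hs : s < ‖f 0‖) : ∑' k, f k ≠ 0 := by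
  have htail : Summable (fun k => f (k + 1)) := .of_norm_bounded hg.summable hfg
  rw [((summable_nat_add_iff 1).mp htail).tsum_eq_zero_add]
  intro h
  have htail_le := tsum_of_norm_bounded hg hfg
  rw [eq_neg_of_add_eq_zero_right h, norm_neg] at htail_le
  linarith

theorem norm_pow_succ_div_factorial_le {l : ℂ} {r : ℝ} (hl : ‖l‖ ≤ r) (k : ℕ) :
    ‖l ^ (k + 1) / ((4 * (k + 1) + 3)! : ℂ)‖ ≤ r / 7! * (r / 8 ^ 4) ^ k := by
  have hfac : (7! * (8 ^ 4) ^ k : ℝ) ≤ (4 * (k + 1) + 3)! := by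
    rw [show 4 * (k + 1) + 3 = 7 + 4 * k by ring, ← pow_mul]
    exact_mod_cast Nat.factorial_mul_pow_le_factorial
  have hr : 0 ≤ r := (norm_nonneg l).trans hl
  calc ‖l ^ (k + 1) / ((4 * (k + 1) + 3)! : ℂ)‖ = ‖l‖ ^ (k + 1) / (4 * (k + 1) + 3)! := by
        rw [norm_div, norm_pow, norm_natCast]
    _ ≤ r ^ (k + 1) / (7! * (8 ^ 4) ^ k) := by gcongr
    _ = r / 7! * (r / 8 ^ 4) ^ k := by rw [div_pow, pow_succ']; field_simp

theorem tsum_pow_div_factorial_four_mul_add_three_ne_zero {l : ℂ} (hl : ‖l‖ ≤ 625) :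
    ∑' k : ℕ, l ^ k / ((Nat.factorial (4 * k + 3) : ℕ) : ℂ) ≠ 0 := by
  refine tsum_ne_zero_of_norm_tail_le
    ((hasSum_geometric_of_lt_one (r := 625 / 8 ^ 4) (by norm_num) (by norm_num)).mul_left
      (625 / 7! : ℝ))
    (norm_pow_succ_div_factorial_le hl) ?_
  norm_num [Nat.factorial]

theorem hasSum_sinh_sub_sin (z : ℂ) :
    HasSum (fun k : ℕ => 2 * z ^ (4 * k + 3) / ↑(4 * k + 3)!) (sinh z - sin z) := by
  have hodd : Function.Injective (fun k : ℕ => 2 * k + 1) := fun a b h => by simp_all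
  have h := (hodd.hasSum_iff ?_).mpr ((hasSum_sinh z).sub (hasSum_sin z))
  · have hindex : ∀ k : ℕ, 2 * (2 * k + 1) + 1 = 4 * k + 3 := fun k => by ring
    simpa [Function.comp_def, hindex, (odd_two_mul_add_one _).neg_one_pow, ← two_mul,
      mul_div_assoc] using h
  · intro n hn
    have hev : Even n := Nat.not_odd_iff_even.mp fun ⟨k, hk⟩ => hn ⟨k, hk.symm⟩
    simp [hev.neg_one_pow]

theorem hasSum_pow_four_div_factorial {ρ : ℂ} (hρ : ρ ≠ 0) :
    HasSum (fun k : ℕ => (ρ ^ 4) ^ k / ((Nat.factorial (4 * k + 3) : ℕ) : ℂ))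
      ((sinh ρ - sin ρ) / (2 * ρ ^ 3)) := by
  have hterm : ∀ k : ℕ, 2 * ρ ^ (4 * k + 3) / ((4 * k + 3)! : ℂ) / (2 * ρ ^ 3) =
      (ρ ^ 4) ^ k / ((4 * k + 3)! : ℂ) := fun k => by
    rw [pow_add, pow_mul]
    field_simp
  have h := (hasSum_sinh_sub_sin ρ).div_const (2 * ρ ^ 3)
  rwa [funext hterm] at h

/-- The entire function `h(λ) = Σ_{k=0}^∞ λᵏ/(4k+3)!` has no zeros in the
closed disk `|λ| ≤ 625`; equivalently, `sinh ρ ≠ sin ρ` for `0 < |ρ| ≤ 5`. -/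
theorem char_fun_ne_zero_on_disk :
    (∀ l : ℂ, ‖l‖ ≤ 625 →
      (∑' k : ℕ, l ^ k / ((Nat.factorial (4 * k + 3) : ℕ) : ℂ)) ≠ 0) ∧
    (∀ ρ : ℂ, 0 < ‖ρ‖ → ‖ρ‖ ≤ 5 → Complex.sinh ρ ≠ Complex.sin ρ) := by
  refine ⟨fun l hl => tsum_pow_div_factorial_four_mul_add_three_ne_zero hl,
    fun ρ hρ hρ5 hsinh => ?_⟩
  have hsum := hasSum_pow_four_div_factorial (norm_pos_iff.mp hρ)
  rw [hsinh, sub_self, zero_div] at hsum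
  refine tsum_pow_div_factorial_four_mul_add_three_ne_zero ?_ hsum.tsum_eq
  calc ‖ρ ^ 4‖ = ‖ρ‖ ^ 4 := norm_pow ρ 4
    _ ≤ 5 ^ 4 := by gcongr
    _ = 625 := by norm_num
end

section
/- For every complex number ρ with |ρ| ≥ 5 and 0 ≤ arg ρ ≤ π/8, one has |sinh ρ| > |sin ρ|; consequently, every zero ρ of sinh ρ − sin ρ with |ρ| ≥ 5 and 0 ≤ arg ρ ≤ π/2 satisfies π/8 < arg ρ < 3π/8. -/
open Complex Real

/-! Writing `ρ = x + iy`, one has `‖sin ρ‖² = sin² x + sinh² y` and `‖sinh ρ‖² = sinh² x + sin² y`.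
In the sector `|arg ρ| ≤ π/8` we have `2|y| ≤ x`, so `sinh² y ≤ sinh² (x/2) =: s²`, while
`sinh² x = 4 s² (1 + s²)` exceeds `1 + s²` as soon as `s > 1/2`. Since `sin (w i) = i sinh w` and
`sinh (w i) = i sin w`, rotating by `i` gives the reverse inequality in the sector around `i ℝ₊`;
a zero of `sinh − sin` has `‖sinh ρ‖ = ‖sin ρ‖`, so it lies in neither sector. -/

namespace Complex

theorem sq_norm_sin (z : ℂ) : ‖sin z‖ ^ 2 = Real.sin z.re ^ 2 + Real.sinh z.im ^ 2 := by
  have hsin : sin z =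
      (Real.sin z.re * Real.cosh z.im : ℝ) + (Real.cos z.re * Real.sinh z.im : ℝ) * I := by
    conv_lhs => rw [← re_add_im z]
    rw [sin_add, cos_mul_I, sin_mul_I]
    push_cast
    ring
  rw [Complex.sq_norm, hsin, normSq_add_mul_I]
  nlinarith [Real.cosh_sq z.im, Real.sin_sq_add_cos_sq z.re]

theorem sq_norm_sinh (z : ℂ) : ‖sinh z‖ ^ 2 = Real.sinh z.re ^ 2 + Real.sin z.im ^ 2 := by
  have hsinh : sinh z =
      (Real.sinh z.re * Real.cos z.im : ℝ) + (Real.cosh z.re * Real.sin z.im : ℝ) * I := by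
    conv_lhs => rw [← re_add_im z]
    rw [sinh_add, cosh_mul_I, sinh_mul_I]
    push_cast
    ring
  rw [Complex.sq_norm, hsinh, normSq_add_mul_I]
  nlinarith [Real.cosh_sq z.re, Real.sin_sq_add_cos_sq z.im]

end Complex

theorem Real.sin_sq_add_sinh_sq_lt_sinh_sq {x y : ℝ} (hx : 1 < x) (hy : 2 * |y| ≤ x) :
    Real.sin x ^ 2 + Real.sinh y ^ 2 < Real.sinh x ^ 2 := by
  set s := Real.sinh (x / 2)
  have hsinh_y : Real.sinh y ^ 2 ≤ s ^ 2 := by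
    rw [← sq_abs, Real.abs_sinh]
    exact pow_le_pow_left₀ (Real.sinh_nonneg_iff.2 (abs_nonneg y))
      (Real.sinh_le_sinh.2 (by linarith)) 2
  have hs : 1 / 2 < s := lt_of_lt_of_le (by linarith) (Real.self_le_sinh_iff.2 (by linarith))
  have hdouble : Real.sinh x ^ 2 = 4 * s ^ 2 * (1 + s ^ 2) := by
    rw [show x = 2 * (x / 2) by ring, Real.sinh_two_mul, mul_pow, mul_pow, Real.cosh_sq]
    ring
  have hs2 : 1 / 4 < s ^ 2 := by nlinarith
  nlinarith [Real.sin_sq_le_one x]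

theorem Real.two_mul_abs_sin_le_cos_of_abs_le {θ : ℝ} (h : |θ| ≤ π / 8) :
    2 * |Real.sin θ| ≤ Real.cos θ := by
  -- `cos θ ≥ 1 - θ² / 2 > 0.92` and `2 |sin θ| ≤ 2 |θ| < 0.8`
  have hπ : π / 8 < 0.4 := by linarith [pi_lt_d2]
  nlinarith [abs_sin_le_abs (x := θ), one_sub_sq_div_two_le_cos (x := θ), sq_abs θ, abs_nonneg θ]

namespace Complex

variable {z : ℂ}

theorem two_mul_abs_im_le_re_of_abs_arg_le (h : |arg z| ≤ π / 8) : 2 * |z.im| ≤ z.re := by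
  rw [← norm_mul_sin_arg, ← norm_mul_cos_arg, abs_mul, abs_norm]
  nlinarith [Real.two_mul_abs_sin_le_cos_of_abs_le h, norm_nonneg z]

theorem two_mul_abs_re_le_im_of_abs_arg_sub_le (h : |arg z - π / 2| ≤ π / 8) :
    2 * |z.re| ≤ z.im := by
  have := Real.two_mul_abs_sin_le_cos_of_abs_le h
  rw [← norm_mul_sin_arg, ← norm_mul_cos_arg, abs_mul, abs_norm,
    show arg z = (arg z - π / 2) + π / 2 by ring, Real.sin_add_pi_div_two,
    Real.cos_add_pi_div_two, abs_neg]
  nlinarith [norm_nonneg z]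

theorem norm_sin_lt_norm_sinh_of_two_mul_abs_im_le_re (hz : 2 ≤ ‖z‖) (h : 2 * |z.im| ≤ z.re) :
    ‖sin z‖ < ‖sinh z‖ := by
  have hre : 1 < z.re := by
    have hnorm_sq : ‖z‖ ^ 2 = z.re ^ 2 + z.im ^ 2 := by rw [Complex.sq_norm, normSq_apply]; ring
    nlinarith [sq_abs z.im, abs_nonneg z.im]
  rw [← sq_lt_sq₀ (norm_nonneg _) (norm_nonneg _), sq_norm_sin, sq_norm_sinh]
  exact (Real.sin_sq_add_sinh_sq_lt_sinh_sq hre h).trans_le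
    (le_add_of_nonneg_right (sq_nonneg _))

theorem norm_sinh_lt_norm_sin_of_two_mul_abs_re_le_im (hz : 2 ≤ ‖z‖) (h : 2 * |z.re| ≤ z.im) :
    ‖sinh z‖ < ‖sin z‖ := by
  have hw : z = z * -I * I := by rw [mul_assoc, neg_mul, I_mul_I, neg_neg, mul_one]
  have hrot := norm_sin_lt_norm_sinh_of_two_mul_abs_im_le_re (z := z * -I) (by simpa using hz)
    (by simpa using h)
  rwa [hw, sin_mul_I, sinh_mul_I, norm_mul, norm_mul, norm_I, mul_one, mul_one]

end Complex

/-- For `|ρ| ≥ 5` and `0 ≤ arg ρ ≤ π/8` one has `|sinh ρ| > |sin ρ|`;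
consequently every zero of `sinh ρ − sin ρ` with `|ρ| ≥ 5` and `0 ≤ arg ρ ≤ π/2`
satisfies `π/8 < arg ρ < 3π/8`. -/
theorem abs_sinh_gt_abs_sin_in_sector :
    (∀ ρ : ℂ, 5 ≤ ‖ρ‖ → 0 ≤ ρ.arg → ρ.arg ≤ Real.pi / 8 →
      ‖Complex.sin ρ‖ < ‖Complex.sinh ρ‖) ∧
    (∀ ρ : ℂ, 5 ≤ ‖ρ‖ → 0 ≤ ρ.arg → ρ.arg ≤ Real.pi / 2 →
      Complex.sinh ρ - Complex.sin ρ = 0 →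
      Real.pi / 8 < ρ.arg ∧ ρ.arg < 3 * Real.pi / 8) := by
  have lower_sector : ∀ ρ : ℂ, 5 ≤ ‖ρ‖ → 0 ≤ ρ.arg → ρ.arg ≤ π / 8 → ‖sin ρ‖ < ‖sinh ρ‖ :=
    fun ρ hr h0 h8 => norm_sin_lt_norm_sinh_of_two_mul_abs_im_le_re (by linarith)
      (two_mul_abs_im_le_re_of_abs_arg_le (abs_le.2 ⟨by linarith [pi_pos], h8⟩))
  refine ⟨lower_sector, fun ρ hr h0 h2 hzero => ?_⟩
  have hnorm : ‖sinh ρ‖ = ‖sin ρ‖ := by rw [sub_eq_zero.1 hzero]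
  constructor
  · by_contra! h
    exact (lower_sector ρ hr h0 h).ne' hnorm
  · by_contra! h
    exact (norm_sinh_lt_norm_sin_of_two_mul_abs_re_le_im (by linarith)
      (two_mul_abs_re_le_im_of_abs_arg_sub_le (abs_le.2 ⟨by linarith, by linarith⟩))).ne hnorm
end

section
/- Let ρ be a complex number with |ρ| ≥ 5 and π/8 ≤ arg ρ ≤ 3π/8, and suppose that |ρ − exp(iπ/4)·(√2·πn + π/(2√2))| ≥ 0.1 for every integer n. Then |exp(ρ) − i·exp(−iρ)| > 0.4. -/
open Complex Real

/-!
With `z = (1 + i)ρ - iπ/2` one has `exp ρ - i·exp(-iρ) = i·exp(-iρ)·(exp z - 1)`, and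
`|exp(-iρ)| = exp(Im ρ) ≥ exp(5 sin(π/8)) > 6.6` in the sector. The zeros `ρₙ⋄` become the
zeros `2πin` of `exp z - 1`, and distance `0.1` from them becomes distance `0.1·√2 > 0.14`.
Then `|exp z - 1| ≥ 0.065`: if `|Re z| ≥ 0.08` because `|exp z|` is far from `1`, and otherwise
because `Im z` is far from `2πℤ`, so that `1 - cos (Im z)` is bounded below.
-/

theorem Complex.norm_exp_sub_one_sq (z : ℂ) :
    ‖exp z - 1‖ ^ 2 = (Real.exp z.re - 1) ^ 2 + 2 * Real.exp z.re * (1 - Real.cos z.im) := by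
  rw [Complex.sq_norm, normSq_apply]
  simp only [sub_re, sub_im, exp_re, exp_im, one_re, one_im]
  linear_combination Real.exp z.re ^ 2 * Real.sin_sq_add_cos_sq z.im

theorem Real.div_one_add_le_abs_exp_sub_one {a x : ℝ} (ha : 0 ≤ a) (hx : a ≤ |x|) :
    a / (1 + a) ≤ |Real.exp x - 1| := by
  rcases le_abs'.1 hx with hx | hx
  · have hmul : Real.exp x * (1 + a) ≤ 1 := by
      have h1 : 1 + a ≤ Real.exp (-x) := by linarith [Real.one_sub_le_exp_neg x]
      calc Real.exp x * (1 + a) ≤ Real.exp x * Real.exp (-x) := by gcongr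
        _ = 1 := by rw [← Real.exp_add, add_neg_cancel, Real.exp_zero]
    have hle : Real.exp x ≤ 1 := Real.exp_le_one_iff.2 (by linarith)
    rw [abs_sub_comm, abs_of_nonneg (by linarith), div_le_iff₀ (by positivity)]
    nlinarith
  · have := Real.add_one_le_exp x
    rw [abs_of_nonneg (by linarith)]
    calc a / (1 + a) ≤ a := div_le_self ha (by linarith)
      _ ≤ _ := by linarith

theorem Real.exists_int_abs_sub_two_pi_mul_le_pi (y : ℝ) : ∃ n : ℤ, |y - n * (2 * π)| ≤ π := by
  refine ⟨toIocDiv two_pi_pos (-π) y, abs_le.2 ?_⟩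
  have h := toIocMod_mem_Ioc two_pi_pos (-π) y
  rw [← self_sub_toIocDiv_zsmul, zsmul_eq_mul] at h
  constructor <;> linarith [h.1, h.2]

theorem Complex.cos_im_le_of_forall_le_norm_sub {z : ℂ} {δ : ℝ} (hδ : 0 ≤ δ)
    (hz : ∀ n : ℤ, δ ≤ ‖z - n * (2 * π) * I‖) :
    Real.cos z.im ≤ 1 - 2 / π ^ 2 * (δ ^ 2 - z.re ^ 2) := by
  obtain ⟨n, hn⟩ := Real.exists_int_abs_sub_two_pi_mul_le_pi z.im
  have hdist : δ ^ 2 ≤ z.re ^ 2 + (z.im - n * (2 * π)) ^ 2 := by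
    have h := pow_le_pow_left₀ hδ (hz n) 2
    rw [Complex.sq_norm, normSq_apply] at h
    simp only [sub_re, sub_im, mul_re, mul_im, I_re, I_im, ofReal_re, ofReal_im,
      intCast_re, intCast_im, re_ofNat, im_ofNat] at h
    nlinarith
  rw [← Real.cos_sub_int_mul_two_pi z.im n]
  have := Real.cos_le_one_sub_mul_cos_sq hn
  have : 0 ≤ 2 / π ^ 2 := by positivity
  nlinarith

theorem Complex.norm_exp_sub_one_ge_of_forall_le_norm_sub {z : ℂ}
    (hz : ∀ n : ℤ, 0.14 ≤ ‖z - n * (2 * π) * I‖) :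
    0.065 ≤ ‖exp z - 1‖ := by
  refine le_of_sq_le_sq ?_ (norm_nonneg _)
  rw [norm_exp_sub_one_sq]
  have hexp := Real.exp_pos z.re
  rcases le_or_gt 0.08 |z.re| with hre | hre
  · have h := Real.div_one_add_le_abs_exp_sub_one (by norm_num) hre
    have hcos := Real.cos_le_one z.im
    have : (0.065 : ℝ) ≤ |Real.exp z.re - 1| := le_trans (by norm_num) h
    nlinarith [sq_abs (Real.exp z.re - 1)]
  · have hcos := cos_im_le_of_forall_le_norm_sub (by norm_num) hz
    have hexp' : 0.92 ≤ Real.exp z.re := by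
      linarith [Real.add_one_le_exp z.re, (abs_lt.1 hre).1]
    have hpi : π ^ 2 < 9.93 := by nlinarith [Real.pi_lt_d2, Real.pi_pos]
    have hre2 : z.re ^ 2 < 0.0064 := by nlinarith [sq_abs z.re, abs_nonneg z.re]
    have : 0.0132 * (2 / π ^ 2) ≤ 1 - Real.cos z.im := by
      nlinarith [show 0 < 2 / π ^ 2 by positivity]
    have : 0.0132 * 2 / 9.93 ≤ 0.0132 * (2 / π ^ 2) := by
      rw [mul_div_assoc]; gcongr
    nlinarith

theorem Complex.le_im_of_le_norm_of_le_arg {ρ : ℂ} {r θ : ℝ} (hθ : 0 ≤ θ) (hr : r ≤ ‖ρ‖)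
    (h₁ : θ ≤ ρ.arg) (h₂ : ρ.arg ≤ π / 2) : r * Real.sin θ ≤ ρ.im := by
  rw [← norm_mul_sin_arg]
  have hsin : 0 ≤ Real.sin θ :=
    Real.sin_nonneg_of_nonneg_of_le_pi hθ (by linarith [Real.pi_pos])
  calc r * Real.sin θ ≤ ‖ρ‖ * Real.sin θ := mul_le_mul_of_nonneg_right hr hsin
    _ ≤ ‖ρ‖ * Real.sin ρ.arg := mul_le_mul_of_nonneg_left
        (Real.sin_le_sin_of_le_of_le_pi_div_two (by linarith) h₂ h₁) (norm_nonneg _)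

theorem Real.sin_pi_div_eight_gt : 0.38 < Real.sin (π / 8) := by
  have h2 : √2 < 1.42 := (Real.sqrt_lt' (by norm_num)).2 (by norm_num)
  rw [Real.sin_pi_div_eight, lt_div_iff₀ two_pos, Real.lt_sqrt (by norm_num)]
  linarith

theorem Real.exp_one_point_nine_gt : 6.6 < Real.exp 1.9 := by
  have he := Real.exp_one_gt_d9
  have hneg : 0.9 ≤ Real.exp (-0.1) := by linarith [Real.add_one_le_exp (-0.1)]
  have hsplit : Real.exp 1.9 = Real.exp 1 * Real.exp 1 * Real.exp (-0.1) := by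
    rw [← Real.exp_add, ← Real.exp_add]; norm_num
  rw [hsplit]
  nlinarith [Real.exp_pos (-0.1)]

theorem Complex.exp_I_mul_pi_div_four_mul_eq (n : ℤ) :
    exp (I * π / 4) * ((√2 * π * n + π / (2 * √2) : ℝ) : ℂ) = (1 + I) * (n * π + π / 4) := by
  have hexp : exp (I * π / 4) = ((√2 / 2 : ℝ) : ℂ) * (1 + I) := by
    rw [show I * π / 4 = ((π / 4 : ℝ) : ℂ) * I by push_cast; ring, exp_mul_I,
      ← ofReal_cos, ← ofReal_sin, Real.cos_pi_div_four, Real.sin_pi_div_four]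
    push_cast; ring
  have hreal : √2 / 2 * (√2 * π * n + π / (2 * √2)) = n * π + π / 4 := by
    have : √2 ≠ 0 := by positivity
    field_simp
    rw [Real.sq_sqrt zero_le_two]
    ring
  rw [hexp, mul_comm _ (1 + I), mul_assoc, ← ofReal_mul, hreal]
  push_cast; ring

/-- If `|ρ| ≥ 5`, `π/8 ≤ arg ρ ≤ 3π/8`, and `ρ` keeps distance at least
`0.1` from every point `exp(iπ/4)·(√2·πn + π/(2√2))`, `n ∈ ℤ`, then
`|exp ρ − i·exp(−iρ)| > 0.4`. -/
theorem abs_g_lower_bound (ρ : ℂ) (h5 : 5 ≤ norm ρ)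
    (harg1 : Real.pi / 8 ≤ ρ.arg) (harg2 : ρ.arg ≤ 3 * Real.pi / 8)
    (hdist : ∀ n : ℤ, (0.1 : ℝ) ≤ norm (ρ - Complex.exp (Complex.I * Real.pi / 4) *
      ((Real.sqrt 2 * Real.pi * (n : ℝ) + Real.pi / (2 * Real.sqrt 2) : ℝ) : ℂ))) :
    (0.4 : ℝ) < norm (Complex.exp ρ - Complex.I * Complex.exp (-Complex.I * ρ)) := by
  have him : 1.9 ≤ ρ.im := by
    have := le_im_of_le_norm_of_le_arg (by positivity) h5 harg1 (by linarith [Real.pi_pos])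
    linarith [Real.sin_pi_div_eight_gt]
  set z := (1 + I) * ρ - π / 2 * I
  have hfactor : exp ρ - I * exp (-I * ρ) = I * exp (-I * ρ) * (exp z - 1) := by
    have : exp (-I * ρ) * exp z = -I * exp ρ := by
      rw [← Complex.exp_add, show -I * ρ + z = ρ - π / 2 * I by ring, Complex.exp_sub,
        exp_pi_div_two_mul_I, div_I, neg_mul, mul_comm]
    linear_combination -I * this + exp ρ * I_sq
  have hz : ∀ n : ℤ, 0.14 ≤ ‖z - n * (2 * π) * I‖ := by
    intro n
    have hzero : z - n * (2 * π) * I = (1 + I) * (ρ - (1 + I) * (n * π + π / 4)) := by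
      linear_combination (n * π + π / 4 : ℂ) * I_sq
    have h2 : (1.4 : ℝ) < √2 := (Real.lt_sqrt (by norm_num)).2 (by norm_num)
    have hnorm : ‖(1 + I : ℂ)‖ = √2 := by rw [norm_def, normSq_apply]; norm_num
    have hρ := hdist n
    rw [exp_I_mul_pi_div_four_mul_eq] at hρ
    rw [hzero, norm_mul, hnorm]
    nlinarith
  rw [hfactor, norm_mul, norm_mul, norm_I, norm_exp]
  simp only [neg_mul, neg_re, mul_re, I_re, I_im, zero_mul, one_mul, zero_sub, neg_neg]
  have := Real.exp_one_point_nine_gt.trans_le (Real.exp_le_exp.2 him)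
  nlinarith [norm_exp_sub_one_ge_of_forall_le_norm_sub hz]
end

section
/- For each integer n ≥ 1, the function f(ρ) = sinh ρ − sin ρ has exactly one zero, counted with multiplicity (in particular this zero is simple), in the open disk {ρ : |ρ − exp(iπ/4)·(√2·πn + π/(2√2))| < 0.1}. Moreover, every zero of f with |ρ| > 5 and π/8 < arg ρ < 3π/8 lies in one of these disks. -/
/-
Multiplying by `2 * exp (I * ρ)` turns `sinh ρ - sin ρ` into `F ρ = exp ((1 + I) * ρ) - I - ν ρ`,
where `ν ρ = exp ((I - 1) * ρ) - I * exp (2 * I * ρ)` is exponentially small once `re ρ` and `im ρ`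
are both large. The zeros of `exp ((1 + I) * ρ) - I` are the points `ρₖ⋄ = diskCenter k`, `k ∈ ℤ`,
where its derivative is `(1 + I) * I`. On the disk of radius `0.1` around `ρₙ⋄` the chord map
`ρ ↦ ρ - F ρ / ((1 + I) * I)` is therefore a contraction, so `F` has exactly one zero there, and a
simple one. Conversely, at a zero in the sector `exp ((1 + I) * ρ - π / 2 * I) = 1 - I * ν ρ` is
close to `1`, and taking its logarithm places `ρ` within `3 / 2 * ‖ν ρ‖` of some `ρₖ⋄`.
-/

open Complex Real Metric
open scoped NNReal

theorem exists_fixedPoint_mem_ball_of_lipschitzOnWith {X : Type*} [MetricSpace X]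
    [CompleteSpace X] {T : X → X} {c : X} {r : ℝ} {q : ℝ≥0} (hq : q < 1)
    (hT : LipschitzOnWith q T (closedBall c r)) (hc : dist (T c) c < (1 - q) * r) :
    ∃ z ∈ ball c r, T z = z ∧ ∀ w ∈ closedBall c r, T w = w → w = z := by
  have hr : 0 ≤ r := by
    have : (0 : ℝ) < 1 - q := sub_pos.2 (by exact_mod_cast hq)
    nlinarith [dist_nonneg (x := T c) (y := c)]
  have hball : ∀ z ∈ closedBall c r, T z ∈ ball c r := fun z hz =>
    calc dist (T z) c ≤ dist (T z) (T c) + dist (T c) c := dist_triangle _ _ _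
      _ < q * r + (1 - q) * r := by
        refine add_lt_add_of_le_of_lt ?_ hc
        exact (hT.dist_le_mul z hz c (mem_closedBall_self hr)).trans (by gcongr; exact hz)
      _ = r := by ring
  have hmaps : Set.MapsTo T (closedBall c r) (closedBall c r) := fun z hz =>
    ball_subset_closedBall (hball z hz)
  obtain ⟨z, hz, hfix, -⟩ := ContractingWith.exists_fixedPoint' (K := q)
    isClosed_closedBall.isComplete hmaps ⟨hq, hT.mapsToRestrict hmaps⟩
    (mem_closedBall_self hr) (edist_ne_top _ _)
  refine ⟨z, hfix ▸ hball z hz, hfix, fun w hw hTw => ?_⟩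
  have hwz : dist w z ≤ q * dist w z := by
    simpa only [hTw, hfix.eq] using hT.dist_le_mul w hw z hz
  have : (q : ℝ) < 1 := by exact_mod_cast hq
  exact dist_le_zero.1 (by nlinarith [dist_nonneg (x := w) (y := z)])

theorem exists_zero_mem_ball_of_norm_one_sub_div_le {𝕜 : Type*} [RCLike 𝕜] {F F' : 𝕜 → 𝕜}
    {a c : 𝕜} {r : ℝ} {q : ℝ≥0} (hq : q < 1)
    (hF : ∀ z ∈ closedBall c r, HasDerivAt F (F' z) z)
    (hF' : ∀ z ∈ closedBall c r, ‖1 - F' z / a‖ ≤ q) (hc : ‖F c / a‖ < (1 - q) * r) :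
    ∃ z ∈ ball c r, F z = 0 ∧ F' z ≠ 0 ∧ ∀ w ∈ closedBall c r, F w = 0 → w = z := by
  have hq' : ∀ z ∈ closedBall c r, F' z / a ≠ 0 := fun z hz h0 => by
    have := hF' z hz
    rw [h0, sub_zero, norm_one] at this
    exact absurd hq (not_lt.2 (by exact_mod_cast this))
  have hT : LipschitzOnWith q (fun z => z - F z / a) (closedBall c r) :=
    (convex_closedBall c r).lipschitzOnWith_of_nnnorm_hasDerivWithin_le
      (fun z hz => ((hasDerivAt_id z).sub ((hF z hz).div_const a)).hasDerivWithinAt)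
      (fun z hz => by rw [← NNReal.coe_le_coe, coe_nnnorm]; exact hF' z hz)
  obtain ⟨z, hz, hTz, huniq⟩ := exists_fixedPoint_mem_ball_of_lipschitzOnWith hq hT
    (by rwa [dist_eq_norm, sub_sub_cancel_left, norm_neg])
  have ha : a ≠ 0 := (div_ne_zero_iff.1 (hq' z (ball_subset_closedBall hz))).2
  have hfix : ∀ w, w - F w / a = w ↔ F w = 0 := by simp [ha]
  exact ⟨z, hz, (hfix z).1 hTz, (div_ne_zero_iff.1 (hq' z (ball_subset_closedBall hz))).1,
    fun w hw hw0 => huniq w hw ((hfix w).2 hw0)⟩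

theorem deriv_ne_zero_of_hasDerivAt_mul {𝕜 : Type*} [NontriviallyNormedField 𝕜] {f h : 𝕜 → 𝕜}
    {z g' : 𝕜} (hh : DifferentiableAt 𝕜 h z) (hf : DifferentiableAt 𝕜 f z) (hz : f z = 0)
    (hg : HasDerivAt (fun x => h x * f x) g' z) (hg' : g' ≠ 0) : deriv f z ≠ 0 := by
  intro h0
  have := hh.hasDerivAt.mul hf.hasDerivAt
  rw [hz, h0, mul_zero, mul_zero, add_zero] at this
  exact hg' (hg.unique this)

theorem exp_neg_fifteen_quarters_lt : Real.exp (-(15 / 4)) < 1 / 30 := by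
  have := Real.sum_le_exp_of_nonneg (x := 15 / 4) (by norm_num) 6
  norm_num [Finset.sum_range_succ, Nat.factorial] at this
  rw [Real.exp_neg]
  exact inv_lt_of_inv_lt₀ (by norm_num) (by linarith)

theorem exp_neg_two_mul_fifteen_quarters_lt : Real.exp (-(2 * (15 / 4))) < 1 / 900 := by
  rw [show -(2 * (15 / 4 : ℝ)) = -(15 / 4) + -(15 / 4) by ring, Real.exp_add]
  nlinarith [exp_neg_fifteen_quarters_lt, Real.exp_pos (-(15 / 4))]

theorem three_eighths_lt_sin_pi_div_eight : 3 / 8 < Real.sin (π / 8) := by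
  have h := Real.sin_gt_sub_cube (x := π / 8) (by positivity)
  have hcube : (π / 8) ^ 3 ≤ (3.15 / 8) ^ 3 := by gcongr; linarith [pi_lt_d2]
  linarith [pi_gt_d2]

theorem norm_mul_sin_lt_re_and_im {ρ : ℂ} {α : ℝ} (hα : 0 ≤ α) (h1 : α < arg ρ)
    (h2 : arg ρ < π / 2 - α) : ‖ρ‖ * Real.sin α < ρ.re ∧ ‖ρ‖ * Real.sin α < ρ.im := by
  have hsin : ∀ θ, α < θ → θ < π / 2 - α → Real.sin α < Real.sin θ := fun θ hθ₁ hθ₂ =>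
    strictMonoOn_sin ⟨by linarith [pi_pos], by linarith⟩ ⟨by linarith [pi_pos], by linarith⟩ hθ₁
  have hρ : 0 < ‖ρ‖ := norm_pos_iff.2 (by rintro rfl; rw [arg_zero] at h1; linarith)
  constructor
  · rw [← norm_mul_cos_arg, ← Real.sin_pi_div_two_sub]
    exact mul_lt_mul_of_pos_left (hsin _ (by linarith) (by linarith)) hρ
  · rw [← norm_mul_sin_arg]
    exact mul_lt_mul_of_pos_left (hsin _ h1 h2) hρ

noncomputable def diskCenter (x : ℝ) : ℂ :=
  exp (I * π / 4) * ((√2 * π * x + π / (2 * √2) : ℝ) : ℂ)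

theorem diskCenter_eq (x : ℝ) : diskCenter x = ((π * x + π / 4 : ℝ) : ℂ) * (1 + I) := by
  have hexp : exp (I * π / 4) = ((√2 / 2 : ℝ) : ℂ) * (1 + I) := by
    rw [show I * π / 4 = ((π / 4 : ℝ) : ℂ) * I by push_cast; ring, exp_mul_I, ← ofReal_cos,
      ← ofReal_sin, cos_pi_div_four, sin_pi_div_four]
    ring
  have hre : √2 / 2 * (√2 * π * x + π / (2 * √2)) = π * x + π / 4 := by
    field_simp
    rw [Real.sq_sqrt zero_le_two]
    ring
  rw [diskCenter, hexp, ← hre]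
  push_cast
  ring

theorem diskCenter_re (x : ℝ) : (diskCenter x).re = π * x + π / 4 := by
  simp [diskCenter_eq]

theorem diskCenter_im (x : ℝ) : (diskCenter x).im = π * x + π / 4 := by
  simp [diskCenter_eq]

theorem one_add_I_mul_diskCenter (x : ℝ) :
    (1 + I) * diskCenter x = x * (2 * π * I) + π / 2 * I := by
  rw [diskCenter_eq]
  push_cast
  ring_nf
  rw [I_sq]
  ring

theorem exp_one_add_I_mul_diskCenter (k : ℤ) : exp ((1 + I) * diskCenter k) = I := by
  rw [one_add_I_mul_diskCenter, Complex.exp_add, ofReal_intCast, exp_int_mul_two_pi_mul_I,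
    exp_pi_div_two_mul_I, one_mul]

theorem one_le_norm_one_add_I : 1 ≤ ‖1 + I‖ := by
  simpa using abs_re_le_norm (1 + I)

theorem norm_one_add_I_le_two : ‖1 + I‖ ≤ 2 :=
  (norm_add_le _ _).trans (by norm_num)

noncomputable def nu (ρ : ℂ) : ℂ := exp ((I - 1) * ρ) - I * exp (2 * I * ρ)

noncomputable def nuDeriv (ρ : ℂ) : ℂ := (I - 1) * exp ((I - 1) * ρ) + 2 * exp (2 * I * ρ)

theorem hasDerivAt_nu (ρ : ℂ) : HasDerivAt nu (nuDeriv ρ) ρ := by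
  refine ((((hasDerivAt_id' ρ).const_mul (I - 1)).cexp).sub
    ((((hasDerivAt_id' ρ).const_mul (2 * I)).cexp).const_mul I)).congr_deriv ?_
  rw [nuDeriv]
  ring_nf
  rw [I_sq]
  ring

section

variable {ρ : ℂ} {m : ℝ}

theorem norm_exp_I_sub_one_mul_le (hre : m ≤ ρ.re) (him : m ≤ ρ.im) :
    ‖exp ((I - 1) * ρ)‖ ≤ Real.exp (-(2 * m)) := by
  rw [Complex.norm_exp, show ((I - 1) * ρ).re = -ρ.re - ρ.im by simp]
  exact Real.exp_le_exp.2 (by linarith)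

theorem norm_exp_two_I_mul_le (him : m ≤ ρ.im) : ‖exp (2 * I * ρ)‖ ≤ Real.exp (-(2 * m)) := by
  rw [Complex.norm_exp, show (2 * I * ρ).re = -(2 * ρ.im) by simp]
  exact Real.exp_le_exp.2 (by linarith)

theorem norm_nu_le (hre : m ≤ ρ.re) (him : m ≤ ρ.im) : ‖nu ρ‖ ≤ 2 * Real.exp (-(2 * m)) :=
  calc ‖nu ρ‖ ≤ ‖exp ((I - 1) * ρ)‖ + ‖exp (2 * I * ρ)‖ :=
        (norm_sub_le _ _).trans_eq (by rw [norm_mul, norm_I, one_mul])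
    _ ≤ 2 * Real.exp (-(2 * m)) := by
        linarith [norm_exp_I_sub_one_mul_le hre him, norm_exp_two_I_mul_le him]

theorem norm_nuDeriv_le (hre : m ≤ ρ.re) (him : m ≤ ρ.im) :
    ‖nuDeriv ρ‖ ≤ 4 * Real.exp (-(2 * m)) := by
  have hI : ‖I - 1‖ ≤ 2 := (norm_sub_le _ _).trans (by norm_num)
  calc ‖nuDeriv ρ‖ ≤ ‖I - 1‖ * ‖exp ((I - 1) * ρ)‖ + 2 * ‖exp (2 * I * ρ)‖ :=
        (norm_add_le _ _).trans_eq (by rw [norm_mul, norm_mul, Complex.norm_two])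
    _ ≤ 2 * Real.exp (-(2 * m)) + 2 * Real.exp (-(2 * m)) := by
        gcongr
        exacts [norm_exp_I_sub_one_mul_le hre him, norm_exp_two_I_mul_le him]
    _ = 4 * Real.exp (-(2 * m)) := by ring

end

noncomputable def scaledF (ρ : ℂ) : ℂ := 2 * exp (I * ρ) * (sinh ρ - sin ρ)

noncomputable def scaledF' (ρ : ℂ) : ℂ := (1 + I) * exp ((1 + I) * ρ) - nuDeriv ρ

theorem scaledF_eq (ρ : ℂ) : scaledF ρ = exp ((1 + I) * ρ) - I - nu ρ := by
  have e1 : exp ((1 + I) * ρ) = exp ρ * exp (I * ρ) := by rw [← Complex.exp_add]; ring_nf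
  have e2 : exp ((I - 1) * ρ) = exp (I * ρ) * exp (-ρ) := by rw [← Complex.exp_add]; ring_nf
  have e3 : exp (2 * I * ρ) = exp (I * ρ) * exp (I * ρ) := by rw [← Complex.exp_add]; ring_nf
  have e4 : exp (-ρ * I) = (exp (I * ρ))⁻¹ := by rw [← Complex.exp_neg]; ring_nf
  rw [scaledF, nu, Complex.sinh, Complex.sin, e1, e2, e3, e4, mul_comm ρ I]
  field_simp
  ring

theorem hasDerivAt_scaledF (ρ : ℂ) : HasDerivAt scaledF (scaledF' ρ) ρ := by
  rw [show scaledF = fun ρ => exp ((1 + I) * ρ) - I - nu ρ from funext scaledF_eq]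
  refine ((((hasDerivAt_id' ρ).const_mul (1 + I)).cexp.sub_const I).sub
    (hasDerivAt_nu ρ)).congr_deriv ?_
  rw [scaledF']
  ring

theorem scaledF_eq_zero_iff (ρ : ℂ) : scaledF ρ = 0 ↔ sinh ρ - sin ρ = 0 := by
  simp [scaledF, Complex.exp_ne_zero]

theorem le_re_and_le_im_of_mem_closedBall_diskCenter {n : ℕ} (hn : 1 ≤ n) {z : ℂ}
    (hz : z ∈ closedBall (diskCenter n) 0.1) : 15 / 4 ≤ z.re ∧ 15 / 4 ≤ z.im := by
  have hd : ‖z - diskCenter n‖ ≤ 0.1 := by rwa [mem_closedBall, dist_eq_norm] at hz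
  have hre := (abs_re_le_norm _).trans hd
  have him := (abs_im_le_norm _).trans hd
  rw [sub_re, diskCenter_re, abs_le] at hre
  rw [sub_im, diskCenter_im, abs_le] at him
  have hn' : (1 : ℝ) ≤ n := by exact_mod_cast hn
  constructor <;> nlinarith [pi_gt_d2]

theorem norm_one_sub_scaledF'_div_le {n : ℕ} (hn : 1 ≤ n) {z : ℂ}
    (hz : z ∈ closedBall (diskCenter n) 0.1) : ‖1 - scaledF' z / ((1 + I) * I)‖ ≤ 1 / 2 := by
  obtain ⟨hre, him⟩ := le_re_and_le_im_of_mem_closedBall_diskCenter hn hz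
  set u := (1 + I) * (z - diskCenter n)
  have hu : ‖u‖ ≤ 1 / 5 := by
    rw [norm_mul, ← dist_eq_norm]
    nlinarith [norm_one_add_I_le_two, mem_closedBall.1 hz, dist_nonneg (x := z) (y := diskCenter n)]
  have hexp : exp ((1 + I) * z) = I * exp u := by
    have := exp_one_add_I_mul_diskCenter n
    push_cast at this
    rw [show (1 + I) * z = (1 + I) * diskCenter n + u by ring, Complex.exp_add, this]
  have hsplit : 1 - scaledF' z / ((1 + I) * I) = -(exp u - 1) + nuDeriv z / ((1 + I) * I) := by
    have : (1 + I) * I ≠ 0 :=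
      mul_ne_zero (norm_ne_zero_iff.1 (by linarith [one_le_norm_one_add_I])) I_ne_zero
    rw [scaledF', hexp, sub_div, ← mul_assoc, mul_div_cancel_left₀ _ this]
    ring
  have hν : ‖nuDeriv z / ((1 + I) * I)‖ ≤ 4 / 900 := by
    rw [norm_div, norm_mul, norm_I, mul_one]
    refine (div_le_self (norm_nonneg _) one_le_norm_one_add_I).trans ?_
    linarith [norm_nuDeriv_le hre him, exp_neg_two_mul_fifteen_quarters_lt]
  calc ‖1 - scaledF' z / ((1 + I) * I)‖ ≤ ‖exp u - 1‖ + ‖nuDeriv z / ((1 + I) * I)‖ := by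
        rw [hsplit]; exact (norm_add_le _ _).trans_eq (by rw [norm_neg])
    _ ≤ 2 * (1 / 5) + 4 / 900 := by
        gcongr
        exact (norm_exp_sub_one_le (hu.trans (by norm_num))).trans (by linarith)
    _ ≤ 1 / 2 := by norm_num

theorem exists_unique_zero_mem_ball_diskCenter {n : ℕ} (hn : 1 ≤ n) :
    ∃ z ∈ ball (diskCenter n) 0.1, Complex.sinh z - Complex.sin z = 0 ∧
      deriv (fun ρ => Complex.sinh ρ - Complex.sin ρ) z ≠ 0 ∧
      ∀ w ∈ ball (diskCenter n) 0.1, Complex.sinh w - Complex.sin w = 0 → w = z := by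
  have hc : ‖scaledF (diskCenter n) / ((1 + I) * I)‖ < (1 - (1 / 2 : ℝ≥0)) * 0.1 := by
    have := exp_one_add_I_mul_diskCenter n
    push_cast at this ⊢
    obtain ⟨hre, him⟩ :=
      le_re_and_le_im_of_mem_closedBall_diskCenter hn (mem_closedBall_self (by norm_num))
    rw [scaledF_eq, this, sub_self, zero_sub, norm_div, norm_neg, norm_mul, norm_I, mul_one]
    refine (div_le_self (norm_nonneg _) one_le_norm_one_add_I).trans_lt ?_
    linarith [norm_nu_le hre him, exp_neg_two_mul_fifteen_quarters_lt]
  obtain ⟨z, hz, hz0, hz', huniq⟩ := exists_zero_mem_ball_of_norm_one_sub_div_le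
    (by rw [← NNReal.coe_lt_coe]; norm_num) (fun z _ => hasDerivAt_scaledF z)
    (fun z hz => by simpa using norm_one_sub_scaledF'_div_le hn hz) hc
  refine ⟨z, hz, (scaledF_eq_zero_iff z).1 hz0, ?_, fun w hw hw0 =>
    huniq w (ball_subset_closedBall hw) ((scaledF_eq_zero_iff w).2 hw0)⟩
  exact deriv_ne_zero_of_hasDerivAt_mul (by fun_prop) (by fun_prop) ((scaledF_eq_zero_iff z).1 hz0)
    (hasDerivAt_scaledF z) hz'

theorem exists_int_norm_sub_diskCenter_le {ρ w : ℂ} (h : exp ((1 + I) * ρ) = I + w)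
    (hw : ‖w‖ ≤ 1 / 2) : ∃ k : ℤ, ‖ρ - diskCenter k‖ ≤ 3 / 2 * ‖w‖ := by
  set η := -(I * w)
  have hη : ‖η‖ = ‖w‖ := by simp [η]
  have hη1 : 1 + η ≠ 0 := fun h0 => by
    rw [show η = -1 by linear_combination h0, norm_neg, norm_one] at hη
    linarith
  have hexp : exp ((1 + I) * ρ - π / 2 * I) = exp (log (1 + η)) := by
    rw [Complex.exp_sub, h, exp_pi_div_two_mul_I, exp_log hη1]
    field_simp
    simp only [η]
    linear_combination w * I_sq
  obtain ⟨k, hk⟩ := exp_eq_exp_iff_exists_int.1 hexp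
  refine ⟨k, ?_⟩
  have hlog : (1 + I) * (ρ - diskCenter k) = log (1 + η) := by
    rw [mul_sub, one_add_I_mul_diskCenter]
    linear_combination hk
  calc ‖ρ - diskCenter k‖ ≤ ‖1 + I‖ * ‖ρ - diskCenter k‖ :=
        le_mul_of_one_le_left (norm_nonneg _) one_le_norm_one_add_I
    _ = ‖log (1 + η)‖ := by rw [← norm_mul, hlog]
    _ ≤ 3 / 2 * ‖w‖ := hη ▸ norm_log_one_add_half_le_self (hη.trans_le hw)

theorem exists_mem_ball_diskCenter_of_sinh_sub_sin_eq_zero {ρ : ℂ} (h5 : 5 < ‖ρ‖)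
    (h1 : π / 8 < arg ρ) (h2 : arg ρ < 3 * π / 8) (h0 : Complex.sinh ρ - Complex.sin ρ = 0) :
    ∃ n : ℕ, 1 ≤ n ∧ ρ ∈ ball (diskCenter n) 0.1 := by
  obtain ⟨hre, him⟩ := norm_mul_sin_lt_re_and_im (by positivity) h1 (by linarith)
  have hsin := three_eighths_lt_sin_pi_div_eight
  have hre' : 15 / 8 ≤ ρ.re := by nlinarith
  have him' : 15 / 8 ≤ ρ.im := by nlinarith
  have hν : ‖nu ρ‖ < 1 / 15 := by
    have := norm_nu_le hre' him'
    norm_num at this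
    linarith [exp_neg_fifteen_quarters_lt]
  have hexp : exp ((1 + I) * ρ) = I + nu ρ := by
    rw [← scaledF_eq_zero_iff, scaledF_eq] at h0
    linear_combination h0
  obtain ⟨k, hk⟩ := exists_int_norm_sub_diskCenter_le hexp (by linarith)
  have hk1 : 1 ≤ k := by
    have := (abs_re_le_norm (ρ - diskCenter k)).trans hk
    rw [sub_re, diskCenter_re, abs_le] at this
    by_contra! hk0
    have : (k : ℝ) ≤ 0 := by exact_mod_cast Int.lt_add_one_iff.1 hk0
    nlinarith [pi_lt_d2, pi_pos]
  lift k to ℕ using (by omega)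
  refine ⟨k, by exact_mod_cast hk1, ?_⟩
  rw [mem_ball, dist_eq_norm]
  push_cast at hk
  linarith

/-- For each `n ≥ 1`, the function `f(ρ) = sinh ρ − sin ρ` has exactly one
zero, and this zero is simple, in the open disk of radius `0.1` centered at
`ρₙ⋄ = exp(iπ/4)·(√2·πn + π/(2√2))`; moreover every zero of `f` with `|ρ| > 5` and
`π/8 < arg ρ < 3π/8` lies in one of these disks. -/
theorem sinh_sub_sin_zeros :
    (∀ n : ℕ, 1 ≤ n →
      ∃ z ∈ Metric.ball (Complex.exp (Complex.I * Real.pi / 4) *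
          ((Real.sqrt 2 * Real.pi * (n : ℝ) + Real.pi / (2 * Real.sqrt 2) : ℝ) : ℂ)) (0.1 : ℝ),
        Complex.sinh z - Complex.sin z = 0 ∧
        deriv (fun ρ => Complex.sinh ρ - Complex.sin ρ) z ≠ 0 ∧
        ∀ w ∈ Metric.ball (Complex.exp (Complex.I * Real.pi / 4) *
            ((Real.sqrt 2 * Real.pi * (n : ℝ) + Real.pi / (2 * Real.sqrt 2) : ℝ) : ℂ)) (0.1 : ℝ),
          Complex.sinh w - Complex.sin w = 0 → w = z) ∧
    (∀ ρ : ℂ, 5 < ‖ρ‖ → Real.pi / 8 < ρ.arg → ρ.arg < 3 * Real.pi / 8 →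
      Complex.sinh ρ - Complex.sin ρ = 0 →
      ∃ n : ℕ, 1 ≤ n ∧ ρ ∈ Metric.ball (Complex.exp (Complex.I * Real.pi / 4) *
        ((Real.sqrt 2 * Real.pi * (n : ℝ) + Real.pi / (2 * Real.sqrt 2) : ℝ) : ℂ)) (0.1 : ℝ)) :=
  ⟨fun _ hn => exists_unique_zero_mem_ball_diskCenter hn,
    fun _ h5 h1 h2 h0 => exists_mem_ball_diskCenter_of_sinh_sub_sin_eq_zero h5 h1 h2 h0⟩
end

section
/- Fix θ, σ, t₀, t₁ ∈ ℂ and define, for ρ ∈ ℂ∖{0}, r₁(ρ) = −4i + iθ/ρ + 2iσ/ρ² − i(t₀+t₁)/(2ρ²) − iθ²/(8ρ²) and r₂(ρ) = 4 − iθ/ρ + 2σ/ρ² − (t₀+t₁)/(2ρ²) − θ²/(8ρ²). Then, as |ρ| → ∞, r₂(ρ)/r₁(ρ) − ( i + (1+i)θ/(4ρ) + iσ/ρ² − i(t₀+t₁)/(4ρ²) + θ²/(16ρ²) ) = O(ρ⁻³). -/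
open Complex Filter Asymptotics Topology

/-! In the variable `w = ρ⁻¹` the functions `r₁`, `r₂` and the proposed expansion `A` of `r₂ / r₁`
are polynomials, and `r₂ - A r₁` vanishes to third order at `w = 0`. Since `r₁ → -4i ≠ 0`,
dividing by `r₁` keeps the remainder `O(w³)`. -/

theorem Asymptotics.IsBigO.div_sub_of_sub_mul {α 𝕜 : Type*} [NormedField 𝕜] {l : Filter α}
    {f g h u : α → 𝕜} {c : 𝕜} (hg : Tendsto g l (𝓝 c)) (hc : c ≠ 0)
    (hfgh : (fun x => f x - h x * g x) =O[l] u) :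
    (fun x => f x / g x - h x) =O[l] u := by
  have hg_inv : (fun x => (g x)⁻¹) =O[l] (fun _ => (1 : 𝕜)) :=
    (hg.inv₀ hc).isBigO_one 𝕜
  refine EventuallyEq.trans_isBigO ?_ (by simpa using hfgh.mul hg_inv)
  filter_upwards [hg.eventually_ne hc] with x hx
  field_simp

noncomputable section

namespace CharacteristicRatio

variable (θ σ t₀ t₁ : ℂ)

/-- The coefficient of `ρ⁻²` shared (up to the factor `i`) by `r₁` and `r₂`. -/
def s : ℂ := 2 * σ - (t₀ + t₁) / 2 - θ ^ 2 / 8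

def r₁ (ρ : ℂ) : ℂ :=
  -4 * I + I * θ / ρ + 2 * I * σ / ρ ^ 2 - I * (t₀ + t₁) / (2 * ρ ^ 2) - I * θ ^ 2 / (8 * ρ ^ 2)

def r₂ (ρ : ℂ) : ℂ :=
  4 - I * θ / ρ + 2 * σ / ρ ^ 2 - (t₀ + t₁) / (2 * ρ ^ 2) - θ ^ 2 / (8 * ρ ^ 2)

def expansion (ρ : ℂ) : ℂ :=
  I + (1 + I) * θ / (4 * ρ) + I * σ / ρ ^ 2 - I * (t₀ + t₁) / (4 * ρ ^ 2) + θ ^ 2 / (16 * ρ ^ 2)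

theorem r₁_eq (ρ : ℂ) : r₁ θ σ t₀ t₁ ρ = I * (-4 + θ * ρ⁻¹ + s θ σ t₀ t₁ * ρ⁻¹ ^ 2) := by
  simp only [r₁, s, div_eq_mul_inv, mul_inv, inv_pow]
  ring

theorem r₂_sub_expansion_mul_r₁ (ρ : ℂ) :
    r₂ θ σ t₀ t₁ ρ - expansion θ σ t₀ t₁ ρ * r₁ θ σ t₀ t₁ ρ =
      (ρ ^ 3)⁻¹ * (-I * ((1 + I) * θ / 4 * s θ σ t₀ t₁
        + (I * σ - I * (t₀ + t₁) / 4 + θ ^ 2 / 16) * (θ + s θ σ t₀ t₁ * ρ⁻¹))) := by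
  rw [r₁_eq]
  simp only [r₂, expansion, s, div_eq_mul_inv, mul_inv, inv_pow]
  linear_combination (4 + (2 * σ - (t₀ + t₁) / 2 - θ ^ 2 / 8) * ρ⁻¹ ^ 2) * I_sq

theorem tendsto_r₁_cobounded : Tendsto (r₁ θ σ t₀ t₁) (Bornology.cobounded ℂ) (𝓝 (-4 * I)) := by
  have hpoly : Tendsto (fun w : ℂ => I * (-4 + θ * w + s θ σ t₀ t₁ * w ^ 2)) (𝓝 0) (𝓝 (-4 * I)) :=
    (by fun_prop : Continuous _).tendsto' _ _ (by ring)
  simpa only [Function.comp_def, ← r₁_eq] using hpoly.comp tendsto_inv₀_cobounded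

theorem r₂_sub_expansion_mul_r₁_isBigO :
    (fun ρ => r₂ θ σ t₀ t₁ ρ - expansion θ σ t₀ t₁ ρ * r₁ θ σ t₀ t₁ ρ)
      =O[Bornology.cobounded ℂ] fun ρ => (ρ ^ 3)⁻¹ := by
  simp only [r₂_sub_expansion_mul_r₁]
  have hpoly : Continuous fun w : ℂ => -I * ((1 + I) * θ / 4 * s θ σ t₀ t₁
      + (I * σ - I * (t₀ + t₁) / 4 + θ ^ 2 / 16) * (θ + s θ σ t₀ t₁ * w)) := by fun_prop
  have hbounded := (hpoly.tendsto 0).comp tendsto_inv₀_cobounded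
  simpa using (isBigO_refl _ _).mul (hbounded.isBigO_one ℂ)

end CharacteristicRatio

end

open CharacteristicRatio in
/-- With `r₁(ρ) = −4i + iθ/ρ + 2iσ/ρ² − i(t₀+t₁)/(2ρ²) − iθ²/(8ρ²)` and
`r₂(ρ) = 4 − iθ/ρ + 2σ/ρ² − (t₀+t₁)/(2ρ²) − θ²/(8ρ²)`, as `|ρ| → ∞`,
`r₂/r₁ − (i + (1+i)θ/(4ρ) + iσ/ρ² − i(t₀+t₁)/(4ρ²) + θ²/(16ρ²)) = O(ρ⁻³)`. -/
theorem ratio_r2_r1_asymptotics (θ σ t₀ t₁ : ℂ) :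
    (fun ρ : ℂ =>
        (4 - Complex.I * θ / ρ + 2 * σ / ρ ^ 2 - (t₀ + t₁) / (2 * ρ ^ 2) - θ ^ 2 / (8 * ρ ^ 2)) /
          (-4 * Complex.I + Complex.I * θ / ρ + 2 * Complex.I * σ / ρ ^ 2
            - Complex.I * (t₀ + t₁) / (2 * ρ ^ 2) - Complex.I * θ ^ 2 / (8 * ρ ^ 2)) -
        (Complex.I + (1 + Complex.I) * θ / (4 * ρ) + Complex.I * σ / ρ ^ 2
          - Complex.I * (t₀ + t₁) / (4 * ρ ^ 2) + θ ^ 2 / (16 * ρ ^ 2))) =O[Filter.comap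
            (fun z : ℂ => ‖z‖) Filter.atTop] fun ρ : ℂ => (ρ ^ 3)⁻¹ := by
  rw [comap_norm_atTop]
  exact (r₂_sub_expansion_mul_r₁_isBigO θ σ t₀ t₁).div_sub_of_sub_mul
    (tendsto_r₁_cobounded θ σ t₀ t₁) (by simp)
end
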